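/- arXiv:1207.3527 — 2 statements merged into one kernel-verified Lean document; each statement's English description precedes it below -/
import Mathlib

section
/- Let 𝒰 ⊂ R(n+1)^f be the subspace of f-tuples (g₁, …, g_f) of reflections in SL^±_{n+1}(ℝ) that generate an irreducible dividing reflection group. Then the conjugation action of PGL_{n+1}(ℝ) on 𝒰, given by [g]·(g₁, …, g_f) = (g g₁ g⁻¹, …, g g_f g⁻¹), is proper and free. -/
open Matrix
open scoped Classical

noncomputable section

/-! ### The projective sphere and projective automorphisms -/

/-- `ℝ^{n+1}`, the vector space `V` underlying the projective sphere `Sⁿ`. -/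
abbrev Vec (n : ℕ) := Fin (n + 1) → ℝ

/-- A matrix lies in `SL^±_{n+1}(ℝ)` iff its determinant is `±1`. -/
def IsSLpm {n : ℕ} (M : Matrix (Fin (n + 1)) (Fin (n + 1)) ℝ) : Prop :=
  M.det = 1 ∨ M.det = -1

/-- A reflection: a projective automorphism of the form `I - b ⊗ α` with `α(b) = 2`. -/
def IsReflMat {n : ℕ} (M : Matrix (Fin (n + 1)) (Fin (n + 1)) ℝ) : Prop :=
  ∃ a b : Vec n, a ⬝ᵥ b = 2 ∧ M = 1 - Matrix.vecMulVec b a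

/-- The projective sphere `Sⁿ`: the space of rays in `ℝ^{n+1}`. -/
abbrev PSph (n : ℕ) := Module.Ray ℝ (Vec n)

instance {n : ℕ} : TopologicalSpace (RayVector ℝ (Vec n)) :=
  inferInstanceAs (TopologicalSpace {v : Vec n // v ≠ 0})

instance {n : ℕ} : TopologicalSpace (PSph n) :=
  inferInstanceAs (TopologicalSpace (Quotient (RayVector.Setoid ℝ (Vec n))))

/-- The (projective) action of `GL_{n+1}(ℝ)` on the projective sphere. -/
def rayAct {n : ℕ} (g : GL (Fin (n + 1)) ℝ) : PSph n → PSph n :=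
  Module.Ray.map (Matrix.GeneralLinearGroup.toLin g).toLinearEquiv

/-- The open cone in `ℝ^{n+1}` over a set of rays. -/
def rayCone {n : ℕ} (Ω : Set (PSph n)) : Set (Vec n) :=
  {v | ∃ h : v ≠ 0, rayOfNeZero ℝ v h ∈ Ω}

/-- A properly convex open domain in `Sⁿ`: a nonempty open convex subset whose closure
contains no pair of antipodal points. -/
def IsPCDomain {n : ℕ} (Ω : Set (PSph n)) : Prop :=
  Ω.Nonempty ∧ IsOpen Ω ∧ Convex ℝ (rayCone Ω) ∧
    ∀ v : Vec n, v ≠ 0 → ¬(v ∈ closure (rayCone Ω) ∧ -v ∈ closure (rayCone Ω))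

lemma vecMulVec_mul_vecMulVec' {n : ℕ} (b a c d : Vec n) :
    Matrix.vecMulVec b a * Matrix.vecMulVec c d = (a ⬝ᵥ c) • Matrix.vecMulVec b d := by
  ext i j
  simp only [Matrix.mul_apply, Matrix.vecMulVec_apply, Matrix.smul_apply, smul_eq_mul,
    dotProduct, Finset.sum_mul]
  exact Finset.sum_congr rfl fun k _ => by ring

lemma reflMat_mul_self {n : ℕ} (a b : Vec n) (h : a ⬝ᵥ b = 2) :
    (1 - Matrix.vecMulVec b a) * (1 - Matrix.vecMulVec b a) = 1 := by
  have hX : Matrix.vecMulVec b a * Matrix.vecMulVec b a = (2 : ℝ) • Matrix.vecMulVec b a := by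
    rw [vecMulVec_mul_vecMulVec', h]
  simp only [sub_mul, mul_sub, mul_one, one_mul, hX, two_smul]
  abel

/-- The reflection `I - b ⊗ a` (with `a ⬝ᵥ b = 2`) as an element of `GL_{n+1}(ℝ)`. -/
def reflGL {n : ℕ} (a b : Vec n) (h : a ⬝ᵥ b = 2) : GL (Fin (n + 1)) ℝ :=
  ⟨1 - Matrix.vecMulVec b a, 1 - Matrix.vecMulVec b a,
    reflMat_mul_self a b h, reflMat_mul_self a b h⟩

/-- The conjugate `g γ g⁻¹`, as a matrix. -/
def conjMat {n : ℕ} (g γ : GL (Fin (n + 1)) ℝ) : Matrix (Fin (n + 1)) (Fin (n + 1)) ℝ :=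
  (↑g : Matrix (Fin (n + 1)) (Fin (n + 1)) ℝ) * (↑γ : Matrix (Fin (n + 1)) (Fin (n + 1)) ℝ) *
    (↑(g⁻¹) : Matrix (Fin (n + 1)) (Fin (n + 1)) ℝ)

/-! ### Dividing groups -/

/-- A subgroup of `GL_{n+1}(ℝ)` divides a properly convex open set `Ω ⊂ Sⁿ`:
it preserves `Ω` and acts properly discontinuously and cocompactly on it. -/
def ActsDividinglyOn {n : ℕ} (Γ : Subgroup (GL (Fin (n + 1)) ℝ)) (Ω : Set (PSph n)) : Prop :=
  (∀ γ ∈ Γ, rayAct γ '' Ω = Ω) ∧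
  (∀ K : Set (PSph n), K ⊆ Ω → IsCompact K →
    {γ : GL (Fin (n + 1)) ℝ | γ ∈ Γ ∧ ((rayAct γ '' K) ∩ K).Nonempty}.Finite) ∧
  (∃ K : Set (PSph n), IsCompact K ∧ K ⊆ Ω ∧ ∀ x ∈ Ω, ∃ γ ∈ Γ, x ∈ rayAct γ '' K)

/-- A discrete subgroup of `SL^±_{n+1}(ℝ)` is *dividing* if it divides some properly convex
open subset of `Sⁿ`. -/
def IsDividing {n : ℕ} (Γ : Subgroup (GL (Fin (n + 1)) ℝ)) : Prop :=
  DiscreteTopology ↥Γ ∧ ∃ Ω : Set (PSph n), IsPCDomain Ω ∧ ActsDividinglyOn Γ Ω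

/-- Irreducibility: no proper nonzero invariant linear subspace. -/
def IsIrredSubgroup {n : ℕ} (Γ : Subgroup (GL (Fin (n + 1)) ℝ)) : Prop :=
  ∀ W : Submodule ℝ (Vec n),
    (∀ γ ∈ Γ, ∀ w ∈ W, (↑γ : Matrix (Fin (n + 1)) (Fin (n + 1)) ℝ) *ᵥ w ∈ W) → W = ⊥ ∨ W = ⊤

/-! ### Coxeter orbifold combinatorics -/

/-- The combinatorial data of a compact Coxeter `n`-orbifold: the (pairwise adjacency
structure of the) facets of the base polytope, together with the ridge orders. -/
structure CoxOrbifold (n : ℕ) where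
  f : ℕ
  Adj : Fin f → Fin f → Prop
  adj_symm : ∀ i j, Adj i j → Adj j i
  adj_irrefl : ∀ i, ¬ Adj i i
  ord : Fin f → Fin f → ℕ
  ord_symm : ∀ i j, ord i j = ord j i
  two_le_ord : ∀ i j, Adj i j → 2 ≤ ord i j

/-- The Coxeter matrix of a Coxeter orbifold: `M i i = 1`, `M i j = n_{ij}` for adjacent
facets, and `M i j = 0` (meaning `n_{ij} = ∞`) for non-adjacent facets. -/
def CoxOrbifold.coxMatrix {n : ℕ} (C : CoxOrbifold n) : CoxeterMatrix (Fin C.f) where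
  M := Matrix.of fun i j => if i = j then 1 else if C.Adj i j then C.ord i j else 0
  isSymm := by
    refine Matrix.IsSymm.ext fun i j => ?_
    by_cases h : i = j
    · subst h; simp
    · simp only [Matrix.of_apply, if_neg h, if_neg (Ne.symm h)]
      by_cases ha : C.Adj j i
      · rw [if_pos ha, if_pos (C.adj_symm j i ha), C.ord_symm i j]
      · rw [if_neg ha, if_neg (fun h' => ha (C.adj_symm i j h'))]
  diagonal := by intro i; simp
  off_diagonal := by
    intro i i' h
    simp only [Matrix.of_apply, if_neg h]
    by_cases ha : C.Adj i i'
    · rw [if_pos ha]; have := C.two_le_ord i i' ha; omega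
    · rw [if_neg ha]; omega

/-- The fundamental group of the Coxeter orbifold: the Coxeter group presented by the
Coxeter matrix. -/
def CoxOrbifold.group {n : ℕ} (C : CoxOrbifold n) : Type := C.coxMatrix.Group

instance {n : ℕ} (C : CoxOrbifold n) : Group C.group :=
  inferInstanceAs (Group C.coxMatrix.Group)

/-! ### Cartan matrices, components and types -/

/-- The principal submatrix `A_S`. -/
def restrictMat {ι : Type} (B : Matrix ι ι ℝ) (S : Set ι) : Matrix S S ℝ :=
  B.submatrix Subtype.val Subtype.val

/-- A square real matrix is *indecomposable* if it is not the direct sum of two smaller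
matrices. -/
def IndecomposableMat {ι : Type} (B : Matrix ι ι ℝ) : Prop :=
  ∀ S : Set ι, (∀ i ∈ S, ∀ j ∉ S, B i j = 0 ∧ B j i = 0) → S = ∅ ∨ S = Set.univ

/-- `S` indexes a component of the matrix `B` (for the decomposition into indecomposable
direct summands). -/
def IsComponent {ι : Type} (B : Matrix ι ι ℝ) (S : Set ι) : Prop :=
  S.Nonempty ∧ (∀ i ∈ S, ∀ j ∉ S, B i j = 0 ∧ B j i = 0) ∧
    IndecomposableMat (restrictMat B S)

/-- The principal submatrix `A_S` is of zero type: its smallest real eigenvalue is zero,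
i.e. `0` is a real eigenvalue and all real eigenvalues are nonnegative. -/
def ZeroTypeOn {ι : Type} [Fintype ι] (B : Matrix ι ι ℝ) (S : Set ι) : Prop :=
  haveI : Fintype S := Fintype.ofFinite _
  0 ∈ spectrum ℝ (restrictMat B S) ∧ ∀ μ ∈ spectrum ℝ (restrictMat B S), 0 ≤ μ

/-- Vinberg's conditions (L1) and (L2) for a Cartan matrix `A` compatible with the Coxeter
orbifold data `C`. -/
def IsCartanFor {n : ℕ} (C : CoxOrbifold n) (A : Matrix (Fin C.f) (Fin C.f) ℝ) : Prop :=
  (∀ i, A i i = 2) ∧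
  (∀ i j, i ≠ j → A i j ≤ 0 ∧ (A i j = 0 ↔ A j i = 0)) ∧
  (∀ i j, i ≠ j → C.Adj i j → A i j * A j i = 4 * Real.cos (Real.pi / C.ord i j) ^ 2) ∧
  (∀ i j, i ≠ j → ¬ C.Adj i j → 4 ≤ A i j * A j i)

/-- Vinberg's conditions (L1) and (L2)′: as `IsCartanFor`, but with the strict inequality
`a_{ij} a_{ji} > 4` for non-adjacent facets. -/
def IsCartanFor' {n : ℕ} (C : CoxOrbifold n) (A : Matrix (Fin C.f) (Fin C.f) ℝ) : Prop :=
  (∀ i, A i i = 2) ∧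
  (∀ i j, i ≠ j → A i j ≤ 0 ∧ (A i j = 0 ↔ A j i = 0)) ∧
  (∀ i j, i ≠ j → C.Adj i j → A i j * A j i = 4 * Real.cos (Real.pi / C.ord i j) ^ 2) ∧
  (∀ i j, i ≠ j → ¬ C.Adj i j → 4 < A i j * A j i)

/-- The space `ℙ𝕍(P̂)` of Cartan matrices: `f × f` matrices satisfying (L1) and (L2)′,
of rank `n+1` and with no component of zero type. -/
def PVSet {n : ℕ} (C : CoxOrbifold n) : Set (Matrix (Fin C.f) (Fin C.f) ℝ) :=
  {A | IsCartanFor' C A ∧ A.rank = n + 1 ∧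
    ∀ S : Set (Fin C.f), IsComponent A S → ¬ ZeroTypeOn A S}

/-- The action of the positive diagonal group `ℝ₊^f` on Cartan matrices, as a relation:
`(d₁, …, d_f) ∘ (a_{ij}) = (d_i d_j⁻¹ a_{ij})`. -/
def pvRel {n : ℕ} (C : CoxOrbifold n) (A A' : Matrix (Fin C.f) (Fin C.f) ℝ) : Prop :=
  ∃ d : Fin C.f → ℝ, (∀ i, 0 < d i) ∧ ∀ i j, A' i j = d i * (d j)⁻¹ * A i j

/-- A compact Coxeter orbifold admits a spherical structure iff its fundamental group
(a Coxeter group) is finite. -/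
def CoxOrbifold.AdmitsSpherical {n : ℕ} (C : CoxOrbifold n) : Prop :=
  Finite C.coxMatrix.Group

/-- A compact Coxeter `n`-orbifold admits a Euclidean structure iff it is realized by a
parabolic projective Coxeter group, which by Vinberg's criterion means: some compatible
Cartan matrix has all components of zero type and rank `n`. -/
def CoxOrbifold.AdmitsEuclidean {n : ℕ} (C : CoxOrbifold n) : Prop :=
  ∃ A : Matrix (Fin C.f) (Fin C.f) ℝ, IsCartanFor C A ∧
    (∀ S : Set (Fin C.f), IsComponent A S → ZeroTypeOn A S) ∧ A.rank = n

/-! ### Vinberg's equations and the solution space -/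

/-- The solution set `𝔻̃(P̂)` of Vinberg's equations, intersected with the open set `𝒰_{P̂}`,
for given facet adjacency data `Adj` and ridge orders `ord`.  A point consists of a tuple of
linear functionals `α_i` (as row vectors) and a tuple of reflection vectors `b_i`. -/
def VinbergSet (n f : ℕ) (Adj : Fin f → Fin f → Prop) (ord : Fin f → Fin f → ℕ) :
    Set ((Fin f → Vec n) × (Fin f → Vec n)) :=
  {p | (∀ i, p.1 i ⬝ᵥ p.2 i = 2) ∧
    (∀ i j, Adj i j → ord i j = 2 → p.1 i ⬝ᵥ p.2 j = 0) ∧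
    (∀ i j, Adj i j → 3 ≤ ord i j →
      (p.1 i ⬝ᵥ p.2 j) * (p.1 j ⬝ᵥ p.2 i) = 4 * Real.cos (Real.pi / ord i j) ^ 2) ∧
    (∃ v : Vec n, ∀ i, 0 < p.1 i ⬝ᵥ v) ∧
    Submodule.span ℝ (Set.range p.1) = ⊤ ∧
    (∀ i j, i ≠ j → ((Adj i j ∧ 3 ≤ ord i j) ∨ ¬ Adj i j) → p.1 i ⬝ᵥ p.2 j < 0) ∧
    (∀ i j, i ≠ j → ¬ Adj i j → 4 < (p.1 i ⬝ᵥ p.2 j) * (p.1 j ⬝ᵥ p.2 i))}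

/-- The orbit equivalence of the action of `G̃ = ℝ₊^f × SL^±_{n+1}(ℝ)` on tuples by
`(α_i, b_i) ↦ (d_i α_i g⁻¹, d_i⁻¹ g b_i)`. -/
def vinRel (n f : ℕ) (p q : (Fin f → Vec n) × (Fin f → Vec n)) : Prop :=
  ∃ (d : Fin f → ℝ) (g : GL (Fin (n + 1)) ℝ), (∀ i, 0 < d i) ∧
    IsSLpm (↑g : Matrix (Fin (n + 1)) (Fin (n + 1)) ℝ) ∧
    (∀ i, q.1 i = d i • Matrix.vecMul (p.1 i) (↑g⁻¹ : Matrix (Fin (n + 1)) (Fin (n + 1)) ℝ)) ∧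
    (∀ i, q.2 i = (d i)⁻¹ • ((↑g : Matrix (Fin (n + 1)) (Fin (n + 1)) ℝ) *ᵥ p.2 i))

/-- The orbit equivalence of the action of the subgroup `ℝ₊^f × {±I}` of `G̃`. -/
def vinRelSmall (n f : ℕ) (p q : (Fin f → Vec n) × (Fin f → Vec n)) : Prop :=
  ∃ (d : Fin f → ℝ) (ε : ℝ), (∀ i, 0 < d i) ∧ (ε = 1 ∨ ε = -1) ∧
    (∀ i, q.1 i = (d i * ε) • p.1 i) ∧ (∀ i, q.2 i = ((d i)⁻¹ * ε) • p.2 i)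

/-- The tuple of reflections `R_i = I - b_i α_i` associated with a solution of Vinberg's
equations. -/
def holTuple {n f : ℕ} {Adj : Fin f → Fin f → Prop} {ord : Fin f → Fin f → ℕ}
    (p : (Fin f → Vec n) × (Fin f → Vec n)) (hp : p ∈ VinbergSet n f Adj ord) :
    Fin f → GL (Fin (n + 1)) ℝ :=
  fun i => reflGL (p.1 i) (p.2 i) (hp.1 i)

/-! ### Representation spaces -/

/-- `Hom(π₁(P̂), SL^±_{n+1}(ℝ))`, as the real algebraic set of tuples of images of the
generating reflections, satisfying the Coxeter relations. -/
def HomSet {n : ℕ} (C : CoxOrbifold n) : Set (Fin C.f → GL (Fin (n + 1)) ℝ) :=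
  {ρ | C.coxMatrix.IsLiftable ρ ∧
    ∀ i, IsSLpm (↑(ρ i) : Matrix (Fin (n + 1)) (Fin (n + 1)) ℝ)}

/-- `D_rep(P̂)`: the set of discrete faithful representations
`h : π₁(P̂) → SL^±_{n+1}(ℝ)` whose image is a dividing reflection group. -/
def Drep {n : ℕ} (C : CoxOrbifold n) : Set (Fin C.f → GL (Fin (n + 1)) ℝ) :=
  {ρ | ∃ h : C.coxMatrix.IsLiftable ρ,
    Function.Injective ⇑(C.coxMatrix.toCoxeterSystem.lift ⟨ρ, h⟩) ∧
    (∀ i, IsReflMat (↑(ρ i) : Matrix (Fin (n + 1)) (Fin (n + 1)) ℝ) ∧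
      IsSLpm (↑(ρ i) : Matrix (Fin (n + 1)) (Fin (n + 1)) ℝ)) ∧
    IsDividing (Subgroup.closure (Set.range ρ))}

/-- Conjugacy of representations (the orbit equivalence of the `PGL_{n+1}(ℝ)`-action). -/
def conjRel {n f : ℕ} (ρ ρ' : Fin f → GL (Fin (n + 1)) ℝ) : Prop :=
  ∃ g : GL (Fin (n + 1)) ℝ, ∀ i, ρ' i = g * ρ i * g⁻¹
end

noncomputable section
open Matrix
/-! ### The hyperbolic side -/

/-- The Lorentzian signature vector `(-1, 1, …, 1)`. -/
def eta (n : ℕ) : Vec n := fun k => if k = 0 then -1 else 1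

/-- The Lorentzian inner product `⟨x, y⟩ = -x₁y₁ + x₂y₂ + ⋯ + x_{n+1}y_{n+1}`. -/
def lorentz {n : ℕ} (x y : Vec n) : ℝ := ∑ k, eta n k * x k * y k

/-- The linear functional `2⟨x, ·⟩` of the Lorentzian form, as a row vector. -/
def alphaOf {n : ℕ} (x : Vec n) : Vec n := fun k => 2 * eta n k * x k

/-- The hyperbolic reflection `v ↦ v - 2⟨b, v⟩ b`, as a matrix. -/
def hypReflMat {n : ℕ} (b : Vec n) : Matrix (Fin (n + 1)) (Fin (n + 1)) ℝ :=
  1 - Matrix.vecMulVec b (alphaOf b)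

/-- Data for a hyperbolic Coxeter `n`-polytope (in the Klein model, on the slice `x₁ = 1`):
outward unit normals `ν_i` of the facets and ridge orders. -/
structure HypData (n : ℕ) where
  f : ℕ
  ν : Fin f → Vec n
  ord : Fin f → Fin f → ℕ

namespace HypData
variable {n : ℕ} (Q : HypData n)

/-- The polytope `P ⊂ ℍⁿ` itself, in the Klein model slice `x₁ = 1`. -/
def body : Set (Vec n) :=
  {x | x 0 = 1 ∧ lorentz x x < 0 ∧ ∀ i, 0 ≤ lorentz (Q.ν i) x}

/-- Two facets are adjacent (meet in a ridge). -/
def Adj (i j : Fin Q.f) : Prop :=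
  i ≠ j ∧ ∃ x ∈ Q.body, lorentz (Q.ν i) x = 0 ∧ lorentz (Q.ν j) x = 0

/-- `Q` is a compact hyperbolic Coxeter `n`-polytope: compact, nondegenerate, with unit
normals, and all dihedral angles `π/n_{ij}` for integers `n_{ij} ≥ 2`. -/
def IsCoxeter : Prop :=
  (∀ i, lorentz (Q.ν i) (Q.ν i) = 1) ∧
  (∀ i j, Q.ord i j = Q.ord j i) ∧
  IsCompact Q.body ∧
  (∃ x ∈ Q.body, ∀ i, 0 < lorentz (Q.ν i) x) ∧
  (∀ i, ∃ x ∈ Q.body, lorentz (Q.ν i) x = 0 ∧ ∀ j, j ≠ i → 0 < lorentz (Q.ν j) x) ∧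
  (∀ i j, Q.Adj i j →
    2 ≤ Q.ord i j ∧ lorentz (Q.ν i) (Q.ν j) = -Real.cos (Real.pi / Q.ord i j))

/-- The set of ridges (as unordered pairs of adjacent facets). -/
def ridges : Set (Sym2 (Fin Q.f)) := {p | ∃ i j, p = s(i, j) ∧ Q.Adj i j}

/-- The set of ridges of order `2`. -/
def ridges2 : Set (Sym2 (Fin Q.f)) := {p | ∃ i j, p = s(i, j) ∧ Q.Adj i j ∧ Q.ord i j = 2}

/-- The set of ridges of order `≥ 3`. -/
def ridgesPlus : Set (Sym2 (Fin Q.f)) := {p | ∃ i j, p = s(i, j) ∧ Q.Adj i j ∧ 3 ≤ Q.ord i j}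

/-- `e`, the number of ridges. -/
def numRidges : ℕ := Q.ridges.ncard

/-- `e₂`, the number of ridges of order `2`. -/
def e2 : ℕ := Q.ridges2.ncard

/-- `e₊(P̂)`, the number of ridges of order `≥ 3`. -/
def eplus : ℕ := Q.ridgesPlus.ncard

/-- `δ_P = e - nf + n(n+1)/2`. -/
def deltaP : ℤ := (Q.numRidges : ℤ) - n * Q.f + n * (n + 1) / 2

/-- The hyperbolic point: the solution `(ᾱ₀, b̄₀)` of Vinberg's equations given by
`α_i = 2⟨ν_i, ·⟩` and `b_i = ν_i`. -/
def hypPoint : (Fin Q.f → Vec n) × (Fin Q.f → Vec n) :=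
  (fun i => alphaOf (Q.ν i), Q.ν)

/-- Weak orderability of the associated Coxeter orbifold (for general `n`): the facets may be
relabeled so that each facet `F_i` contains at most `n` ridges of order `2` lying in facets of
higher index, the defining functionals of which are in general position. -/
def WeaklyOrderable : Prop :=
  ∃ σ : Fin Q.f ≃ Fin Q.f, ∀ i,
    {j | σ i < σ j ∧ Q.Adj i j ∧ Q.ord i j = 2}.ncard ≤ n ∧
    LinearIndependent ℝ
      (fun j : {j // σ i < σ j ∧ Q.Adj i j ∧ Q.ord i j = 2} => alphaOf (Q.ν j))

/-- Weak orderability of a compact Coxeter 3-orbifold: the faces can be ordered so that each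
face contains at most `3` edges of order `2` lying in faces of higher index. -/
def WeaklyOrderable3 : Prop :=
  ∃ σ : Fin Q.f ≃ Fin Q.f, ∀ i, {j | σ i < σ j ∧ Q.Adj i j ∧ Q.ord i j = 2}.ncard ≤ 3

end HypData

/-! ### Vinberg's equations and the hyperbolic equations as polynomial maps -/

/-- The polynomial map collecting Vinberg's equations `Φ_{P̂}` (with vanishing components
inserted for index pairs that carry no equation; this does not change the rank of the
differential). -/
def PhiMap (n f : ℕ) (Adj : Fin f → Fin f → Prop) (ord : Fin f → Fin f → ℕ) :
    ((Fin f → Vec n) × (Fin f → Vec n)) →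
      (Fin f → ℝ) × (Fin f → Fin f → ℝ) × (Fin f → Fin f → ℝ) := fun p =>
  (fun i => p.1 i ⬝ᵥ p.2 i - 2,
   fun i j => if i ≠ j ∧ Adj i j ∧ ord i j = 2 then p.1 i ⬝ᵥ p.2 j else 0,
   fun i j => if i < j ∧ Adj i j ∧ 3 ≤ ord i j then
      (p.1 i ⬝ᵥ p.2 j) * (p.1 j ⬝ᵥ p.2 i) - 4 * Real.cos (Real.pi / ord i j) ^ 2
    else 0)

/-- The polynomial map collecting the hyperbolic equations `Ψ_{P̂}`. -/
def PsiMap (n f : ℕ) (Adj : Fin f → Fin f → Prop) (ord : Fin f → Fin f → ℕ) :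
    (Fin f → Vec n) → (Fin f → ℝ) × (Fin f → Fin f → ℝ) := fun b =>
  (fun i => 2 * lorentz (b i) (b i) - 2,
   fun i j => if i < j ∧ Adj i j then
      2 * lorentz (b i) (b j) + 2 * Real.cos (Real.pi / ord i j)
    else 0)

/-- The rank of the differential `DΦ_{P̂}` at a point. -/
def rankDPhi (n f : ℕ) (Adj : Fin f → Fin f → Prop) (ord : Fin f → Fin f → ℕ)
    (p : (Fin f → Vec n) × (Fin f → Vec n)) : ℕ :=
  Module.finrank ℝ ↥(LinearMap.range (fderiv ℝ (PhiMap n f Adj ord) p).toLinearMap)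

/-- The rank of the differential `DΨ_{P̂}` at a point. -/
def rankDPsi (n f : ℕ) (Adj : Fin f → Fin f → Prop) (ord : Fin f → Fin f → ℕ)
    (b : Fin f → Vec n) : ℕ :=
  Module.finrank ℝ ↥(LinearMap.range (fderiv ℝ (PsiMap n f Adj ord) b).toLinearMap)

/-- The dimension of the kernel of the differential `DΨ_{P̂}` at a point. -/
def kerdimDPsi (n f : ℕ) (Adj : Fin f → Fin f → Prop) (ord : Fin f → Fin f → ℕ)
    (b : Fin f → Vec n) : ℕ :=
  Module.finrank ℝ ↥(LinearMap.ker (fderiv ℝ (PsiMap n f Adj ord) b).toLinearMap)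

/-- The set of regular solutions `𝔻̃(P̂)_r`: solutions of Vinberg's equations where the
differential `DΦ_{P̂}` is surjective. -/
def VinbergSetR (n f : ℕ) (Adj : Fin f → Fin f → Prop) (ord : Fin f → Fin f → ℕ) :
    Set ((Fin f → Vec n) × (Fin f → Vec n)) :=
  {p | p ∈ VinbergSet n f Adj ord ∧ Function.Surjective ⇑(fderiv ℝ (PhiMap n f Adj ord) p)}

/-! ### Manifold predicates -/

/-- A subset of a normed space is a smooth embedded submanifold of dimension `k` near each of
its points. -/
def IsSmoothSubmanifoldDim {E : Type*} [NormedAddCommGroup E] [NormedSpace ℝ E]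
    (S : Set E) (k : ℕ) : Prop :=
  ∀ x ∈ S, ∃ (U : Set E) (φ : (Fin k → ℝ) → E), IsOpen U ∧ x ∈ U ∧
    ContDiff ℝ (⊤ : ℕ∞) φ ∧ Topology.IsEmbedding φ ∧ Set.range φ = U ∩ S ∧
    ∀ y, Function.Injective ⇑(fderiv ℝ φ y)

/-- A topological space is a manifold of dimension `k`: every point has an open neighborhood
homeomorphic to `ℝᵏ`. -/
def IsTopManifoldDim (Z : Type*) [TopologicalSpace Z] (k : ℕ) : Prop :=
  ∀ z : Z, ∃ U : Set Z, IsOpen U ∧ z ∈ U ∧ Nonempty (↥U ≃ₜ (Fin k → ℝ))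

/-! ### The Lorentz group `PO(1, n)` -/

/-- A matrix preserves the Lorentzian form. -/
def IsLorentzMat {n : ℕ} (g : Matrix (Fin (n + 1)) (Fin (n + 1)) ℝ) : Prop :=
  ∀ x y : Vec n, lorentz (g *ᵥ x) (g *ᵥ y) = lorentz x y

/-- A matrix lies in `PO(1, n)`: it preserves the Lorentzian form and the positive cone. -/
def IsPOMat {n : ℕ} (g : Matrix (Fin (n + 1)) (Fin (n + 1)) ℝ) : Prop :=
  IsLorentzMat g ∧ ∀ x : Vec n, lorentz x x < 0 → 0 < x 0 → 0 < (g *ᵥ x) 0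

/-- `Hom(π₁(P̂), PO(1,n))` as a real algebraic set: tuples of elements of `PO(1,n)`
satisfying the defining relations of the Coxeter group `π₁(P̂)`. -/
def HomPOSet (n f : ℕ) (Adj : Fin f → Fin f → Prop) (ord : Fin f → Fin f → ℕ) :
    Set (Fin f → Matrix (Fin (n + 1)) (Fin (n + 1)) ℝ) :=
  {ρ | (∀ i, IsPOMat (ρ i)) ∧ (∀ i, ρ i * ρ i = 1) ∧
    ∀ i j, Adj i j → (ρ i * ρ j) ^ ord i j = 1}

/-! ### Projective polytopes and truncation -/


/-- A projective `n`-polytope presented by the linear functionals (row vectors) defining its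
facets: `P = {x ∈ Sⁿ | ∀ i, α_i(x) ≥ 0}`. -/
structure SPolytope (n : ℕ) where
  f : ℕ
  α : Fin f → Vec n

namespace SPolytope
variable {n : ℕ} (S : SPolytope n)

/-- The cone over the polytope. -/
def cone : Set (Vec n) := {v | ∀ i, 0 ≤ S.α i ⬝ᵥ v}

/-- `S` presents a properly convex `n`-polytope with nonempty interior, each inequality
defining a facet. -/
def IsProper : Prop :=
  (∀ v, v ∈ S.cone → -v ∈ S.cone → v = 0) ∧
  (∃ v : Vec n, ∀ i, 0 < S.α i ⬝ᵥ v) ∧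
  (∀ i, ∃ v ∈ S.cone, S.α i ⬝ᵥ v = 0 ∧ ∀ j, j ≠ i → 0 < S.α j ⬝ᵥ v)

/-- A vertex of the polytope (as a ray). -/
def IsVertex (v : Vec n) : Prop :=
  v ∈ S.cone ∧ v ≠ 0 ∧
    Module.finrank ℝ ↥(Submodule.span ℝ {a : Vec n | ∃ i, a = S.α i ∧ S.α i ⬝ᵥ v = 0}) = n

/-- `S` presents an `n`-simplex. -/
def IsSimplex : Prop := S.f = n + 1 ∧ S.IsProper ∧ LinearIndependent ℝ S.α

/-- Two facets are adjacent: they meet in a ridge. -/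
def Adjacent (i j : Fin S.f) : Prop :=
  i ≠ j ∧ ∃ w ∈ S.cone, w ≠ 0 ∧ S.α i ⬝ᵥ w = 0 ∧ S.α j ⬝ᵥ w = 0 ∧
    ∀ k, k ≠ i → k ≠ j → 0 < S.α k ⬝ᵥ w

end SPolytope

/-- Truncation of a polytope at a vertex `v`: cut along a hyperplane `{a = 0}` which avoids
`v` and meets the polytope only in its interior and in the relative interiors of the facets
incident with `v`. -/
def TruncStep {n : ℕ} (S T : SPolytope n) : Prop :=
  S.IsProper ∧ T.IsProper ∧
  ∃ (v a : Vec n) (hf : T.f = S.f + 1),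
    S.IsVertex v ∧ a ⬝ᵥ v < 0 ∧
    (∀ w ∈ S.cone, w ≠ 0 → a ⬝ᵥ w = 0 →
      (∀ i, S.α i ⬝ᵥ w = 0 → S.α i ⬝ᵥ v = 0) ∧ {i | S.α i ⬝ᵥ w = 0}.ncard ≤ 1) ∧
    ∀ k : Fin T.f, T.α k = Fin.snoc (α := fun _ => Vec n) S.α a (Fin.cast hf k)

/-- A polytope obtained from another by iterated truncation. -/
def IteratedTruncation {n : ℕ} (S T : SPolytope n) : Prop :=
  Relation.ReflTransGen TruncStep S T

/-- A truncation `n`-polytope: obtained from an `n`-simplex by iterated truncation. -/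
def IsTruncationPolytope {n : ℕ} (T : SPolytope n) : Prop :=
  ∃ S : SPolytope n, S.IsSimplex ∧ IteratedTruncation S T

/-- Weak orderability of a Coxeter orbifold based on the polytope `S` with ridge orders
`ord`. -/
def SPolytope.WeaklyOrderable {n : ℕ} (S : SPolytope n) (ord : Fin S.f → Fin S.f → ℕ) : Prop :=
  ∃ σ : Fin S.f ≃ Fin S.f, ∀ i,
    {j | σ i < σ j ∧ S.Adjacent i j ∧ ord i j = 2}.ncard ≤ n ∧
    LinearIndependent ℝ
      (fun j : {j // σ i < σ j ∧ S.Adjacent i j ∧ ord i j = 2} => S.α j)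

/-! ### Abstract 3-polyhedra (Steinitz data) -/


/-- An abstract simple 3-polyhedron, presented through its graph (1-skeleton) together with
its face structure, as provided by Steinitz' theorem: a simple, planar (encoded by the face
structure and Euler's formula) graph. -/
structure PolyhedralGraph where
  V : Type
  E : Type
  F : Type
  [fintypeV : Fintype V]
  [fintypeE : Fintype E]
  [fintypeF : Fintype F]
  /-- the two endpoints of an edge -/
  ends : E → Sym2 V
  /-- no loops -/
  loopless : ∀ e, ¬ (ends e).IsDiag
  /-- no multiple edges -/
  noMultiEdge : Function.Injective ends
  /-- the two faces bordering an edge -/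
  edgeFaces : E → Sym2 F
  /-- every edge lies in exactly two distinct faces -/
  edgeFaces_not_diag : ∀ e, ¬ (edgeFaces e).IsDiag
  /-- two faces meet in at most one edge -/
  faces_meet_once : Function.Injective edgeFaces
  /-- every face has at least three edges -/
  face_three_edges : ∀ φ : F, 3 ≤ {e : E | φ ∈ edgeFaces e}.ncard
  /-- Euler's formula (planarity) -/
  euler : (Fintype.card V : ℤ) - Fintype.card E + Fintype.card F = 2

attribute [instance] PolyhedralGraph.fintypeV PolyhedralGraph.fintypeE
  PolyhedralGraph.fintypeF

namespace PolyhedralGraph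
variable (G : PolyhedralGraph)

/-- The underlying simple graph. -/
def graph : SimpleGraph G.V where
  Adj u v := u ≠ v ∧ ∃ e, G.ends e = s(u, v)
  symm := by
    constructor
    rintro u v ⟨huv, e, he⟩
    exact ⟨huv.symm, e, by rwa [Sym2.eq_swap]⟩
  loopless := by constructor; rintro u ⟨h, -⟩; exact h rfl

/-- `G` is 3-connected: removing at most two vertices leaves it connected. -/
def ThreeConnected : Prop :=
  4 ≤ Fintype.card G.V ∧
  ∀ S : Set G.V, S.ncard ≤ 2 → ((G.graph.induce (Sᶜ)).Connected)

/-- `G` is cubic (regular of degree 3); i.e. the polyhedron is simple. -/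
def Cubic : Prop := ∀ v : G.V, {e : G.E | v ∈ G.ends e}.ncard = 3

/-- A prismatic 3-circuit of the dual complex. -/
def HasPrismatic3Circuit : Prop :=
  ∃ (F1 F2 F3 : G.F) (e1 e2 e3 : G.E),
    F1 ≠ F2 ∧ F2 ≠ F3 ∧ F1 ≠ F3 ∧
    G.edgeFaces e1 = s(F1, F2) ∧ G.edgeFaces e2 = s(F2, F3) ∧ G.edgeFaces e3 = s(F3, F1) ∧
    (∀ v : G.V, ¬(v ∈ G.ends e1 ∧ v ∈ G.ends e2)) ∧
    (∀ v : G.V, ¬(v ∈ G.ends e2 ∧ v ∈ G.ends e3)) ∧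
    (∀ v : G.V, ¬(v ∈ G.ends e1 ∧ v ∈ G.ends e3))

/-- `s` is the set of edges crossed by a prismatic 4-circuit of the dual complex. -/
def IsPrismatic4Circuit (s : Finset G.E) : Prop :=
  ∃ (F1 F2 F3 F4 : G.F) (e1 e2 e3 e4 : G.E),
    F1 ≠ F2 ∧ F1 ≠ F3 ∧ F1 ≠ F4 ∧ F2 ≠ F3 ∧ F2 ≠ F4 ∧ F3 ≠ F4 ∧
    G.edgeFaces e1 = s(F1, F2) ∧ G.edgeFaces e2 = s(F2, F3) ∧
    G.edgeFaces e3 = s(F3, F4) ∧ G.edgeFaces e4 = s(F4, F1) ∧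
    (∀ v : G.V, ¬(v ∈ G.ends e1 ∧ v ∈ G.ends e2)) ∧
    (∀ v : G.V, ¬(v ∈ G.ends e1 ∧ v ∈ G.ends e3)) ∧
    (∀ v : G.V, ¬(v ∈ G.ends e1 ∧ v ∈ G.ends e4)) ∧
    (∀ v : G.V, ¬(v ∈ G.ends e2 ∧ v ∈ G.ends e3)) ∧
    (∀ v : G.V, ¬(v ∈ G.ends e2 ∧ v ∈ G.ends e4)) ∧
    (∀ v : G.V, ¬(v ∈ G.ends e3 ∧ v ∈ G.ends e4)) ∧
    s = {e1, e2, e3, e4}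

/-- Weak orderability with respect to a distinguished set of edges (e.g. the edges of order
`2`): the faces can be ordered so that each face contains at most three distinguished edges
lying in faces of higher index. -/
def WeaklyOrderableWith (isTwo : G.E → Prop) : Prop :=
  ∃ ord : G.F → ℕ, Function.Injective ord ∧
    ∀ φ : G.F, {e : G.E | φ ∈ G.edgeFaces e ∧ isTwo e ∧
      ∃ ψ : G.F, ψ ∈ G.edgeFaces e ∧ ord φ < ord ψ}.ncard ≤ 3

end PolyhedralGraph

/-! ### Realization of abstract 3-polyhedra as hyperbolic Coxeter polytopes -/

/-- The edge-order assignment `m` on the abstract 3-polyhedron `G` is realized by a compact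
hyperbolic Coxeter 3-polytope combinatorially equivalent to `G`. -/
def RealizesHyp (G : PolyhedralGraph) (m : G.E → ℕ) : Prop :=
  ∃ (Q : HypData 3) (σ : G.F ≃ Fin Q.f), Q.IsCoxeter ∧
    (∀ φ ψ : G.F, (∃ e, G.edgeFaces e = s(φ, ψ)) ↔ Q.Adj (σ φ) (σ ψ)) ∧
    (∀ (e : G.E) (φ ψ : G.F), G.edgeFaces e = s(φ, ψ) → Q.ord (σ φ) (σ ψ) = m e)

/-- `H_d(P)`: the number of compact hyperbolic Coxeter 3-orbifolds whose base polytope is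
combinatorially equivalent to `G` and whose edge orders are at most `d`. -/
def numHypOrbifolds (G : PolyhedralGraph) (d : ℕ) : ℕ :=
  {m : G.E → ℕ | (∀ e, 2 ≤ m e ∧ m e ≤ d) ∧ RealizesHyp G m}.ncard

/-- `WO_d(P)`: the number of weakly orderable ones among the orbifolds counted by
`numHypOrbifolds`. -/
def numWeaklyOrderable (G : PolyhedralGraph) (d : ℕ) : ℕ :=
  {m : G.E → ℕ | (∀ e, 2 ≤ m e ∧ m e ≤ d) ∧ RealizesHyp G m ∧
    G.WeaklyOrderableWith (fun e => m e = 2)}.ncard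

/-- A real projective structure on the compact Coxeter orbifold `P̂` with combinatorial data
`C`, presented through its developing pair: the universal cover `M` with the deck action of
`π₁(P̂)`, a compact fundamental domain, a developing local homeomorphism (immersion)
`dev : M → Sⁿ` and the associated holonomy homomorphism into `SL^±_{n+1}(ℝ)`. -/
structure ProjStructureOn {n : ℕ} (C : CoxOrbifold n) where
  M : Type
  [topM : TopologicalSpace M]
  [t2M : T2Space M]
  [scM : SimplyConnectedSpace M]
  /-- the deck transformation action of the fundamental group -/
  act : C.group → M ≃ₜ M
  act_one : act 1 = Homeomorph.refl M
  act_mul : ∀ w w' : C.group, act (w * w') = (act w').trans (act w)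
  /-- the action is properly discontinuous -/
  properlyDisc : ∀ K : Set M, IsCompact K →
    {w : C.group | ((act w '' K) ∩ K).Nonempty}.Finite
  /-- a compact fundamental domain -/
  dom : Set M
  dom_compact : IsCompact dom
  dom_covers : ∀ x : M, ∃ w : C.group, x ∈ act w '' dom
  /-- the developing map -/
  dev : M → PSph n
  dev_immersion : IsLocalHomeomorph dev
  /-- the holonomy homomorphism -/
  hol : C.group →* GL (Fin (n + 1)) ℝ
  hol_slpm : ∀ w, IsSLpm (↑(hol w) : Matrix (Fin (n + 1)) (Fin (n + 1)) ℝ)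
  /-- the generating reflections act as reflections -/
  hol_refl : ∀ i, ∃ a b : Vec n, a ⬝ᵥ b = 2 ∧
    (↑(hol (C.coxMatrix.simple i)) : Matrix (Fin (n + 1)) (Fin (n + 1)) ℝ)
      = 1 - Matrix.vecMulVec b a
  equivariant : ∀ w x, dev (act w x) = rayAct (hol w) (dev x)

/-- A projective automorphism of `Sⁿ` preserving the Euclidean space sitting inside an
affine chart: in suitable coordinates, a block matrix `[[O, t], [0, 1]]` with `O ∈ O(n)`. -/
def IsEuclIsomMat {n : ℕ} (M : Matrix (Fin (n + 1)) (Fin (n + 1)) ℝ) : Prop :=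
  (∀ j : Fin n, M (Fin.last n) (Fin.castSucc j) = 0) ∧
  M (Fin.last n) (Fin.last n) = 1 ∧
  (Matrix.of fun i j : Fin n => M (Fin.castSucc i) (Fin.castSucc j))ᵀ *
    (Matrix.of fun i j : Fin n => M (Fin.castSucc i) (Fin.castSucc j)) = 1

/-- The affine transformation of `ℝⁿ` determined by a projective automorphism preserving the
affine chart. -/
def affPart {n : ℕ} (M : Matrix (Fin (n + 1)) (Fin (n + 1)) ℝ) (y : Fin n → ℝ) : Fin n → ℝ :=
  fun i => (∑ j, M (Fin.castSucc i) (Fin.castSucc j) * y j) + M (Fin.castSucc i) (Fin.last n)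


/-- A geometric projective Coxeter group in `SL^±_{n+1}(ℝ)`: reflections `R_i = I − b_i α_i`
(`α_i(b_i) = 2`) in the facets of a properly convex `n`-polytope `P = {α_i ≥ 0}`, such that
`γP̊ ∩ P̊ = ∅` for all `γ ≠ 1` in the generated group. -/
structure ProjCoxGroup (n f : ℕ) where
  /-- the linear functionals defining the fundamental chamber -/
  a : Fin f → Vec n
  /-- the reflection vectors -/
  b : Fin f → Vec n
  /-- the generating reflections, as invertible matrices -/
  R : Fin f → GL (Fin (n + 1)) ℝ
  pairing : ∀ i, a i ⬝ᵥ b i = 2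
  reflEq : ∀ i, (↑(R i) : Matrix (Fin (n + 1)) (Fin (n + 1)) ℝ) = 1 - Matrix.vecMulVec (b i) (a i)
  /-- the chamber is properly convex -/
  properlyConvex : ∀ v : Vec n, (∀ i, 0 ≤ a i ⬝ᵥ v) → (∀ i, 0 ≤ a i ⬝ᵥ (-v)) → v = 0
  /-- the chamber has nonempty interior -/
  thick : ∃ v : Vec n, ∀ i, 0 < a i ⬝ᵥ v
  /-- each inequality defines a facet -/
  facet : ∀ i, ∃ v : Vec n, a i ⬝ᵥ v = 0 ∧ ∀ j, j ≠ i → 0 < a j ⬝ᵥ v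
  /-- the Coxeter group condition `γP̊ ∩ P̊ = ∅` for `γ ≠ 1` -/
  coxeterCond : ∀ γ ∈ Subgroup.closure (Set.range R), γ ≠ 1 →
    ∀ v : Vec n, (∀ i, 0 < a i ⬝ᵥ v) →
      ¬ (∀ i, 0 < a i ⬝ᵥ ((↑γ : Matrix (Fin (n + 1)) (Fin (n + 1)) ℝ) *ᵥ v))

namespace ProjCoxGroup

variable {n f : ℕ} (G : ProjCoxGroup n f)

/-- The group generated by the reflections. -/
def Γ : Subgroup (GL (Fin (n + 1)) ℝ) := Subgroup.closure (Set.range G.R)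

/-- The Cartan matrix `a_{ij} = α_i(b_j)`. -/
def cartan : Matrix (Fin f) (Fin f) ℝ := Matrix.of fun i j => G.a i ⬝ᵥ G.b j

/-- The fundamental chamber `P` (as the cone `{v | ∀ i, α_i(v) ≥ 0}`). -/
def chamberCone : Set (Vec n) := {v | ∀ i, 0 ≤ G.a i ⬝ᵥ v}

/-- `Γ` is perfect: for every point `x` of the fundamental chamber, the subgroup generated by
the reflections in the facets containing `x` is finite (i.e. `P^s = P`). -/
def Perfect : Prop :=
  ∀ v : Vec n, v ≠ 0 → (∀ i, 0 ≤ G.a i ⬝ᵥ v) →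
    (↑(Subgroup.closure {g : GL (Fin (n + 1)) ℝ | ∃ i, g = G.R i ∧ G.a i ⬝ᵥ v = 0}) :
      Set (GL (Fin (n + 1)) ℝ)).Finite

/-- Two facets are adjacent if they meet in a ridge. -/
def Adjacent (i j : Fin f) : Prop :=
  i ≠ j ∧ ∃ v : Vec n, v ≠ 0 ∧ G.a i ⬝ᵥ v = 0 ∧ G.a j ⬝ᵥ v = 0 ∧
    ∀ k, k ≠ i → k ≠ j → 0 < G.a k ⬝ᵥ v

/-- `Γ` is parabolic: it is conjugate to a discrete group generated by reflections in
Euclidean space, leaving no proper affine subspace invariant. -/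
def Parabolic : Prop :=
  DiscreteTopology ↥G.Γ ∧
  ∃ g : GL (Fin (n + 1)) ℝ,
    (∀ γ ∈ G.Γ, IsEuclIsomMat (conjMat g γ)) ∧
    ∀ W : AffineSubspace ℝ (Fin n → ℝ), (W : Set (Fin n → ℝ)).Nonempty →
      (∀ γ ∈ G.Γ, ∀ y ∈ W, affPart (conjMat g γ) y ∈ (W : Set (Fin n → ℝ))) → W = ⊤

end ProjCoxGroup

attribute [instance] ProjStructureOn.topM ProjStructureOn.t2M ProjStructureOn.scM

/-- The tuples of reflections in `SL^±_{n+1}(ℝ)` generating an irreducible dividing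
reflection group (the set `𝒰` of Lemma 3.4). -/
def UTuples (n f : ℕ) : Set (Fin f → GL (Fin (n + 1)) ℝ) :=
  {r | (∀ i, IsReflMat (↑(r i) : Matrix (Fin (n + 1)) (Fin (n + 1)) ℝ) ∧
      IsSLpm (↑(r i) : Matrix (Fin (n + 1)) (Fin (n + 1)) ℝ)) ∧
    IsDividing (Subgroup.closure (Set.range r)) ∧
    IsIrredSubgroup (Subgroup.closure (Set.range r))}

namespace CoxOrbifold
variable {n : ℕ} (C : CoxOrbifold n)

/-- `e`, the number of ridges. -/
def numRidges : ℕ := {p : Sym2 (Fin C.f) | ∃ i j, p = s(i, j) ∧ C.Adj i j}.ncard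

/-- `e₂`, the number of ridges of order 2. -/
def e2 : ℕ := {p : Sym2 (Fin C.f) | ∃ i j, p = s(i, j) ∧ C.Adj i j ∧ C.ord i j = 2}.ncard

/-- `e₊`, the number of ridges of order at least 3. -/
def eplus : ℕ := {p : Sym2 (Fin C.f) | ∃ i j, p = s(i, j) ∧ C.Adj i j ∧ 3 ≤ C.ord i j}.ncard

/-- `δ_P = e - nf + n(n+1)/2`. -/
def deltaP : ℤ := (C.numRidges : ℤ) - n * C.f + n * (n + 1) / 2

end CoxOrbifold

end


/-! ### Auxiliary lemmas for Lemma 3.4 -/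

section Lemma34Aux
open Matrix Filter Topology

variable {n f : ℕ}

/-- local abbreviation for the matrix space -/
private abbrev MatN (n : ℕ) := Matrix (Fin (n + 1)) (Fin (n + 1)) ℝ

noncomputable def nrm {n : ℕ} (A : MatN n) : ℝ := Real.sqrt (∑ i, ∑ j, (A i j) ^ 2)

lemma sumsq_nonneg (A : MatN n) : 0 ≤ ∑ i, ∑ j, (A i j) ^ 2 :=
  Finset.sum_nonneg fun _ _ => Finset.sum_nonneg fun _ _ => sq_nonneg _

lemma abs_entry_le_nrm (A : MatN n) (i j : Fin (n + 1)) : |A i j| ≤ nrm A := by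
  rw [← Real.sqrt_sq_eq_abs]
  apply Real.sqrt_le_sqrt
  calc (A i j) ^ 2 ≤ ∑ j', (A i j') ^ 2 :=
        Finset.single_le_sum (f := fun j' => (A i j') ^ 2)
          (fun _ _ => sq_nonneg _) (Finset.mem_univ j)
    _ ≤ ∑ i', ∑ j', (A i' j') ^ 2 :=
        Finset.single_le_sum (f := fun i' => ∑ j', (A i' j') ^ 2)
          (fun _ _ => Finset.sum_nonneg fun _ _ => sq_nonneg _) (Finset.mem_univ i)

lemma nrm_eq_zero_iff (A : MatN n) : nrm A = 0 ↔ A = 0 := by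
  unfold nrm
  rw [Real.sqrt_eq_zero']
  constructor
  · intro h
    have h0 : ∑ i, ∑ j, (A i j) ^ 2 = 0 := le_antisymm h (sumsq_nonneg A)
    ext i j
    have h2 := (Finset.sum_eq_zero_iff_of_nonneg
      (fun i _ => Finset.sum_nonneg fun j _ => sq_nonneg (A i j))).mp h0 i (Finset.mem_univ i)
    have h3 := (Finset.sum_eq_zero_iff_of_nonneg
      (fun j _ => sq_nonneg (A i j))).mp h2 j (Finset.mem_univ j)
    simpa using (pow_eq_zero_iff two_ne_zero).mp h3
  · rintro rfl; simp

lemma nrm_smul (c : ℝ) (A : MatN n) : nrm (c • A) = |c| * nrm A := by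
  unfold nrm
  have h : ∑ i, ∑ j, ((c • A) i j) ^ 2 = c ^ 2 * ∑ i, ∑ j, (A i j) ^ 2 := by
    simp only [Matrix.smul_apply, smul_eq_mul, mul_pow, Finset.mul_sum]
  rw [h, Real.sqrt_mul (sq_nonneg c), Real.sqrt_sq_eq_abs]

lemma continuous_nrm : Continuous (nrm (n := n)) := by
  apply Real.continuous_sqrt.comp
  apply continuous_finset_sum
  intro i _
  apply continuous_finset_sum
  intro j _
  exact ((continuous_apply j).comp (continuous_apply i)).pow 2

lemma mulVec_single_entry (A : MatN n) (i j : Fin (n + 1)) :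
    (A *ᵥ Pi.single j 1) i = A i j := by
  simp [Matrix.mulVec, dotProduct, Pi.single_apply, mul_ite, Finset.sum_ite_eq']

lemma matrix_eq_of_mulVec {A B : MatN n} (h : ∀ v : Vec n, A *ᵥ v = B *ᵥ v) : A = B := by
  ext i j
  rw [← mulVec_single_entry A i j, ← mulVec_single_entry B i j, h]

lemma vecMulVec_mulVec' (b a x : Vec n) :
    Matrix.vecMulVec b a *ᵥ x = (a ⬝ᵥ x) • b := by
  ext i
  simp only [Matrix.mulVec, Matrix.vecMulVec_apply, dotProduct, Pi.smul_apply, smul_eq_mul,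
    Finset.sum_mul]
  exact Finset.sum_congr rfl fun k _ => by ring

lemma closure_invariant (r : Fin f → GL (Fin (n + 1)) ℝ) (W : Submodule ℝ (Vec n))
    (hW : ∀ i, ∀ w ∈ W, (↑(r i) : MatN n) *ᵥ w ∈ W) :
    ∀ γ ∈ Subgroup.closure (Set.range r), ∀ w ∈ W, (↑γ : MatN n) *ᵥ w ∈ W := by
  intro γ hγ
  induction hγ using Subgroup.closure_induction with
  | mem x hx =>
      obtain ⟨i, rfl⟩ := hx
      exact hW i
  | one => intro w hw; simpa [Units.val_one, Matrix.one_mulVec] using hw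
  | mul x y hx hy ihx ihy =>
      intro w hw
      have : (↑(x * y) : MatN n) *ᵥ w = (↑x : MatN n) *ᵥ ((↑y : MatN n) *ᵥ w) := by
        rw [Units.val_mul, Matrix.mulVec_mulVec]
      rw [this]
      exact ihx _ (ihy w hw)
  | inv x hx ih =>
      have hT : ∀ w ∈ W, (Matrix.mulVecLin (↑x : MatN n)) w ∈ W := by
        intro w hw; simpa [Matrix.mulVecLin_apply] using ih w hw
      set T := LinearMap.restrict (Matrix.mulVecLin (↑x : MatN n)) hT with hTdef
      have hinj : Function.Injective T := by
        intro w1 w2 h12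
        have h13 : (↑x : MatN n) *ᵥ (w1 : Vec n) = ↑x *ᵥ (w2 : Vec n) := by
          have := congrArg Subtype.val h12
          simpa [hTdef, LinearMap.restrict_apply, Matrix.mulVecLin_apply] using this
        have h14 : (↑x⁻¹ : MatN n) *ᵥ ((↑x : MatN n) *ᵥ (w1 : Vec n))
            = (↑x⁻¹ : MatN n) *ᵥ ((↑x : MatN n) *ᵥ (w2 : Vec n)) := by rw [h13]
        rw [Matrix.mulVec_mulVec, Matrix.mulVec_mulVec, ← Units.val_mul, inv_mul_cancel x,
          Units.val_one, Matrix.one_mulVec, Matrix.one_mulVec] at h14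
        exact Subtype.ext h14
      have hsurj := (LinearMap.injective_iff_surjective).mp hinj
      intro w hw
      obtain ⟨w', hw'⟩ := hsurj ⟨w, hw⟩
      have hx' : (↑x : MatN n) *ᵥ (w' : Vec n) = w := by
        have := congrArg Subtype.val hw'
        simpa [hTdef, LinearMap.restrict_apply, Matrix.mulVecLin_apply] using this
      have : (↑x⁻¹ : MatN n) *ᵥ w = (w' : Vec n) := by
        rw [← hx', Matrix.mulVec_mulVec, ← Units.val_mul, inv_mul_cancel x, Units.val_one,
          Matrix.one_mulVec]
      rw [this]
      exact w'.2


lemma scalar_unit_center (c : ℝ) (uc : GL (Fin (n + 1)) ℝ)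
    (huc : (↑uc : MatN n) = c • 1) : uc ∈ Subgroup.center (GL (Fin (n + 1)) ℝ) := by
  rw [Subgroup.mem_center_iff]
  intro h
  apply Units.ext
  show (↑(h * uc) : MatN n) = ↑(uc * h)
  rw [Units.val_mul, Units.val_mul, huc, mul_smul_comm, smul_mul_assoc, mul_one, one_mul]

lemma freeness_core (g : GL (Fin (n + 1)) ℝ) (r : Fin f → GL (Fin (n + 1)) ℝ)
    (hr : r ∈ UTuples n f) (hfix : ∀ i, g * r i = r i * g) :
    g ∈ Subgroup.center (GL (Fin (n + 1)) ℝ) := by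
  obtain ⟨hrefl, hdiv, hirr⟩ := hr
  rcases Nat.eq_zero_or_pos f with hf | hf
  · -- f = 0 : the trivial group is irreducible only in dimension 1
    subst hf
    set b0 : Vec n := Pi.single 0 1 with hb0def
    have hb0ne : b0 ≠ 0 := by
      intro h
      have := congrFun h 0
      simp [hb0def, Pi.single_eq_same] at this
    have hinvar : ∀ γ ∈ Subgroup.closure (Set.range r), ∀ w ∈ Submodule.span ℝ {b0},
        (↑γ : MatN n) *ᵥ w ∈ Submodule.span ℝ {b0} := by
      have hempty : Set.range r = ∅ := Set.range_eq_empty r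
      rw [hempty, Subgroup.closure_empty]
      intro γ hγ w hw
      rw [Subgroup.mem_bot] at hγ
      subst hγ
      simpa [Units.val_one, Matrix.one_mulVec] using hw
    have htop : Submodule.span ℝ {b0} = ⊤ := by
      rcases hirr (Submodule.span ℝ {b0}) hinvar with h | h
      · exact absurd (Submodule.span_singleton_eq_bot.mp h) hb0ne
      · exact h
    have hall : ∀ v : Vec n, ∃ c : ℝ, c • b0 = v := by
      intro v
      exact Submodule.mem_span_singleton.mp (htop ▸ Submodule.mem_top)
    rw [Subgroup.mem_center_iff]
    intro h
    apply Units.ext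
    show (↑(h * g) : MatN n) = ↑(g * h)
    rw [Units.val_mul, Units.val_mul]
    obtain ⟨cg, hcg⟩ := hall ((↑g : MatN n) *ᵥ b0)
    obtain ⟨ch, hch⟩ := hall ((↑h : MatN n) *ᵥ b0)
    apply matrix_eq_of_mulVec
    intro v
    obtain ⟨c, hc⟩ := hall v
    subst hc
    have key : ∀ (A B : MatN n) (cA cB : ℝ), cA • b0 = A *ᵥ b0 → cB • b0 = B *ᵥ b0 →
        (A * B) *ᵥ (c • b0) = (c * (cB * cA)) • b0 := by
      intro A B cA cB hA hB
      simp only [← Matrix.mulVec_mulVec, Matrix.mulVec_smul, ← hB, ← hA, smul_smul, mul_assoc]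
    rw [key (↑h) (↑g) ch cg hch hcg, key (↑g) (↑h) cg ch hcg hch, mul_comm cg ch]
  · -- f > 0 : eigenvector argument
    have i0 : Fin f := ⟨0, hf⟩
    obtain ⟨a, b, hab, hmat⟩ := (hrefl i0).1
    have hbne : b ≠ 0 := by
      intro h
      rw [h] at hab
      simp [dotProduct] at hab
    have hcomm : ∀ i, (↑g : MatN n) * (↑(r i) : MatN n) = (↑(r i) : MatN n) * (↑g : MatN n) := by
      intro i
      rw [← Units.val_mul, ← Units.val_mul, hfix i]
    have hX : (↑g : MatN n) * Matrix.vecMulVec b a = Matrix.vecMulVec b a * (↑g : MatN n) := by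
      have h1 := hcomm i0
      rw [hmat, mul_sub, sub_mul, mul_one, one_mul] at h1
      exact sub_right_injective h1
    set lam : ℝ := (a ⬝ᵥ ((↑g : MatN n) *ᵥ b)) / 2 with hlamdef
    have hgb : (↑g : MatN n) *ᵥ b = lam • b := by
      have e1 : (↑g : MatN n) *ᵥ (Matrix.vecMulVec b a *ᵥ b)
          = Matrix.vecMulVec b a *ᵥ ((↑g : MatN n) *ᵥ b) := by
        rw [Matrix.mulVec_mulVec, Matrix.mulVec_mulVec, hX]
      rw [vecMulVec_mulVec', vecMulVec_mulVec', hab, Matrix.mulVec_smul] at e1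
      have e2 : (↑g : MatN n) *ᵥ b
          = ((1 : ℝ) / 2) • ((a ⬝ᵥ ((↑g : MatN n) *ᵥ b)) • b) := by
        rw [← e1, smul_smul]
        norm_num
      rw [e2, smul_smul, hlamdef]
      ring_nf
    set W : Submodule ℝ (Vec n) :=
      LinearMap.ker (Matrix.mulVecLin (↑g : MatN n) - lam • LinearMap.id) with hWdef
    have hWmem : ∀ w : Vec n, w ∈ W ↔ (↑g : MatN n) *ᵥ w = lam • w := by
      intro w
      rw [hWdef, LinearMap.mem_ker, LinearMap.sub_apply, LinearMap.smul_apply,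
        LinearMap.id_apply, Matrix.mulVecLin_apply, sub_eq_zero]
    have hWinv : ∀ i, ∀ w ∈ W, (↑(r i) : MatN n) *ᵥ w ∈ W := by
      intro i w hw
      rw [hWmem] at hw ⊢
      rw [Matrix.mulVec_mulVec, hcomm i, ← Matrix.mulVec_mulVec, hw, Matrix.mulVec_smul]
    have hWb : b ∈ W := (hWmem b).mpr hgb
    have htop : W = ⊤ := by
      rcases hirr W (closure_invariant r W hWinv) with h | h
      · rw [h, Submodule.mem_bot] at hWb
        exact absurd hWb hbne
      · exact h
    have hgs : (↑g : MatN n) = lam • 1 := by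
      apply matrix_eq_of_mulVec
      intro v
      have hv : v ∈ W := htop ▸ Submodule.mem_top
      rw [(hWmem v).mp hv, Matrix.smul_mulVec, Matrix.one_mulVec]
    exact scalar_unit_center lam g hgs


lemma nrm_nonneg (A : MatN n) : 0 ≤ nrm A := Real.sqrt_nonneg _

lemma box_compact (R : ℝ) : IsCompact {A : MatN n | ∀ i j, A i j ∈ Set.Icc (-R) R} := by
  have h : IsCompact (Set.pi Set.univ fun _ : Fin (n + 1) =>
      Set.pi Set.univ fun _ : Fin (n + 1) => Set.Icc (-R) R) :=
    isCompact_univ_pi fun _ => isCompact_univ_pi fun _ => isCompact_Icc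
  have hset : {A : MatN n | ∀ i j, A i j ∈ Set.Icc (-R) R}
      = Set.pi Set.univ fun _ : Fin (n + 1) =>
        Set.pi Set.univ fun _ : Fin (n + 1) => Set.Icc (-R) R := by
    ext A
    constructor
    · intro hA i _ j _
      exact hA i j
    · intro hA i j
      exact hA i (Set.mem_univ i) j (Set.mem_univ j)
  rw [hset]
  exact h

lemma glPairEmbedding : Topology.IsEmbedding
    (fun g : GL (Fin (n + 1)) ℝ => ((↑g : MatN n), (↑(g⁻¹) : MatN n))) := by
  have h1 := Units.isEmbedding_embedProduct (M := MatN n)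
  have h2 := (Homeomorph.prodCongr (Homeomorph.refl (MatN n))
    (MulOpposite.opHomeomorph (M := MatN n)).symm).isEmbedding
  exact h2.comp h1

set_option maxHeartbeats 2000000 in
set_option synthInstance.maxHeartbeats 1000000 in
lemma properness_core (K L : Set (Fin f → GL (Fin (n + 1)) ℝ)) (hKU : K ⊆ UTuples n f)
    (hK : IsCompact K) (hL : IsCompact L) :
    IsCompact ((QuotientGroup.mk ''
        {g : GL (Fin (n + 1)) ℝ | ∃ r ∈ K, (fun i => g * r i * g⁻¹) ∈ L}) :
      Set (GL (Fin (n + 1)) ℝ ⧸ Subgroup.center (GL (Fin (n + 1)) ℝ))) := by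
  haveI hfcmat : FirstCountableTopology (MatN n) :=
    inferInstanceAs (FirstCountableTopology (Fin (n + 1) → Fin (n + 1) → ℝ))
  haveI hfcop : FirstCountableTopology (MatN n)ᵐᵒᵖ :=
    (MulOpposite.opHomeomorph (M := MatN n)).symm.isEmbedding.firstCountableTopology
  haveI : FirstCountableTopology (GL (Fin (n + 1)) ℝ) :=
    (Units.isEmbedding_embedProduct (M := MatN n)).firstCountableTopology
  set C : Set (GL (Fin (n + 1)) ℝ) :=
    {h | nrm (↑h : MatN n) = 1 ∧ ∃ r ∈ K, (fun i => h * r i * h⁻¹) ∈ L} with hCdef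
  -- Step 1: uniform bound on the inverses of elements of `C`
  have hbound : ∃ R : ℝ, ∀ h ∈ C, ∀ i j, |(↑(h⁻¹) : MatN n) i j| ≤ R := by
    by_contra hcon
    push_neg at hcon
    have hseq : ∀ k : ℕ, ∃ h : GL (Fin (n + 1)) ℝ,
        h ∈ C ∧ (k : ℝ) < nrm (↑(h⁻¹) : MatN n) := by
      intro k
      obtain ⟨h, hCm, i, j, hij⟩ := hcon k
      exact ⟨h, hCm, lt_of_lt_of_le hij (abs_entry_le_nrm _ i j)⟩
    choose h hCm hn using hseq
    have hrs := fun k => (hCm k).2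
    choose r hrK hrL using hrs
    set c : ℕ → ℝ := fun k => nrm (↑((h k)⁻¹) : MatN n) with hcdef
    have hcpos : ∀ k, 0 < c k := fun k => lt_of_le_of_lt (Nat.cast_nonneg k) (hn k)
    have hctop : Tendsto c atTop atTop :=
      tendsto_atTop_mono (fun k => (hn k).le) tendsto_natCast_atTop_atTop
    have hcinv : Tendsto (fun k => (c k)⁻¹) atTop (𝓝 0) := hctop.inv_tendsto_atTop
    set s : ℕ → Fin f → GL (Fin (n + 1)) ℝ := fun k i => h k * r k i * (h k)⁻¹ with hsdef
    have hsL : ∀ k, s k ∈ L := hrL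
    set x : ℕ → MatN n × MatN n × (Fin f → GL (Fin (n + 1)) ℝ) × (Fin f → GL (Fin (n + 1)) ℝ) :=
      fun k => ((↑(h k) : MatN n), (c k)⁻¹ • (↑((h k)⁻¹) : MatN n), r k, s k) with hxdef
    set B1 : Set (MatN n) := {A | ∀ i j, A i j ∈ Set.Icc (-(1 : ℝ)) 1} with hB1def
    have hmem : ∀ k, x k ∈ B1 ×ˢ B1 ×ˢ K ×ˢ L := by
      intro k
      refine ⟨?_, ?_, hrK k, hsL k⟩
      · intro i j
        rw [Set.mem_Icc, ← abs_le]
        calc |(↑(h k) : MatN n) i j| ≤ nrm (↑(h k) : MatN n) := abs_entry_le_nrm _ i j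
          _ = 1 := (hCm k).1
      · intro i j
        rw [Set.mem_Icc, ← abs_le]
        have habs : |((c k)⁻¹ • (↑((h k)⁻¹) : MatN n)) i j|
            = (c k)⁻¹ * |(↑((h k)⁻¹) : MatN n) i j| := by
          rw [Matrix.smul_apply, smul_eq_mul, abs_mul,
            abs_of_nonneg (inv_nonneg.mpr (hcpos k).le)]
        rw [habs]
        calc (c k)⁻¹ * |(↑((h k)⁻¹) : MatN n) i j| ≤ (c k)⁻¹ * c k :=
              mul_le_mul_of_nonneg_left (abs_entry_le_nrm _ i j)
                (inv_nonneg.mpr (hcpos k).le)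
          _ = 1 := inv_mul_cancel₀ (hcpos k).ne'
    have hB1c : IsCompact B1 := box_compact 1
    have hcomp : IsCompact (B1 ×ˢ B1 ×ˢ K ×ˢ L) := hB1c.prod (hB1c.prod (hK.prod hL))
    obtain ⟨⟨A, U, rr, ss⟩, hq, φ, hφ, hconv⟩ := hcomp.tendsto_subseq hmem
    obtain ⟨hqA, hqU, hqr, hqs⟩ := hq
    have tend1 : Tendsto (fun k => (↑(h (φ k)) : MatN n)) atTop (𝓝 A) :=
      (continuous_fst.tendsto _).comp hconv
    have tend2 : Tendsto (fun k => (c (φ k))⁻¹ • (↑((h (φ k))⁻¹) : MatN n)) atTop (𝓝 U) :=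
      ((continuous_fst.comp continuous_snd).tendsto _).comp hconv
    have tendr : ∀ i, Tendsto (fun k => (↑(r (φ k) i) : MatN n)) atTop
        (𝓝 (↑(rr i) : MatN n)) := by
      intro i
      have hcont : Continuous fun q : MatN n × MatN n × (Fin f → GL (Fin (n + 1)) ℝ) ×
          (Fin f → GL (Fin (n + 1)) ℝ) => (↑(q.2.2.1 i) : MatN n) :=
        Units.continuous_val.comp ((continuous_apply i).comp
          (continuous_fst.comp (continuous_snd.comp continuous_snd)))
      exact (hcont.tendsto _).comp hconv
    have tends : ∀ i, Tendsto (fun k => (↑(s (φ k) i) : MatN n)) atTop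
        (𝓝 (↑(ss i) : MatN n)) := by
      intro i
      have hcont : Continuous fun q : MatN n × MatN n × (Fin f → GL (Fin (n + 1)) ℝ) ×
          (Fin f → GL (Fin (n + 1)) ℝ) => (↑(q.2.2.2 i) : MatN n) :=
        Units.continuous_val.comp ((continuous_apply i).comp
          (continuous_snd.comp (continuous_snd.comp continuous_snd)))
      exact (hcont.tendsto _).comp hconv
    have hcinvφ : Tendsto (fun k => (c (φ k))⁻¹) atTop (𝓝 0) :=
      hcinv.comp hφ.tendsto_atTop
    have hnrmA : nrm A = 1 := by
      have t1 : Tendsto (fun k => nrm (↑(h (φ k)) : MatN n)) atTop (𝓝 (nrm A)) :=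
        (continuous_nrm.tendsto A).comp tend1
      have t2 : (fun k => nrm (↑(h (φ k)) : MatN n)) = fun _ => (1 : ℝ) :=
        funext fun k => (hCm (φ k)).1
      rw [t2] at t1
      exact tendsto_nhds_unique t1 tendsto_const_nhds
    have hnrmU : nrm U = 1 := by
      have t1 : Tendsto (fun k => nrm ((c (φ k))⁻¹ • (↑((h (φ k))⁻¹) : MatN n))) atTop
          (𝓝 (nrm U)) := (continuous_nrm.tendsto U).comp tend2
      have t2 : (fun k => nrm ((c (φ k))⁻¹ • (↑((h (φ k))⁻¹) : MatN n))) = fun _ => (1 : ℝ) := by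
        funext k
        rw [nrm_smul, abs_of_nonneg (inv_nonneg.mpr (hcpos (φ k)).le)]
        exact inv_mul_cancel₀ (hcpos (φ k)).ne'
      rw [t2] at t1
      exact tendsto_nhds_unique t1 tendsto_const_nhds
    have hAU : A * U = 0 := by
      have t1 : Tendsto (fun k => (↑(h (φ k)) : MatN n) *
          ((c (φ k))⁻¹ • (↑((h (φ k))⁻¹) : MatN n))) atTop (𝓝 (A * U)) := tend1.mul tend2
      have t2 : (fun k => (↑(h (φ k)) : MatN n) * ((c (φ k))⁻¹ • (↑((h (φ k))⁻¹) : MatN n)))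
          = fun k => (c (φ k))⁻¹ • (1 : MatN n) := by
        funext k
        rw [mul_smul_comm, ← Units.val_mul, mul_inv_cancel (h (φ k)), Units.val_one]
      rw [t2] at t1
      have t3 : Tendsto (fun k => (c (φ k))⁻¹ • (1 : MatN n)) atTop
          (𝓝 ((0 : ℝ) • (1 : MatN n))) := hcinvφ.smul_const _
      rw [zero_smul] at t3
      exact tendsto_nhds_unique t1 t3
    have hrel : ∀ i, A * (↑(rr i) : MatN n) = (↑(ss i) : MatN n) * A := by
      intro i
      have t1 : Tendsto (fun k => (↑(h (φ k)) : MatN n) * (↑(r (φ k) i) : MatN n)) atTop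
          (𝓝 (A * (↑(rr i) : MatN n))) := tend1.mul (tendr i)
      have t2 : (fun k => (↑(h (φ k)) : MatN n) * (↑(r (φ k) i) : MatN n))
          = fun k => (↑(s (φ k) i) : MatN n) * (↑(h (φ k)) : MatN n) := by
        funext k
        rw [← Units.val_mul, ← Units.val_mul]
        congr 1
        simp only [hsdef]
        group
      rw [t2] at t1
      exact tendsto_nhds_unique t1 ((tends i).mul tend1)
    obtain ⟨hrefl', hdiv', hirr'⟩ := hKU hqr
    have hUne : U ≠ 0 := by
      intro h0
      rw [h0, (nrm_eq_zero_iff (0 : MatN n)).mpr rfl] at hnrmU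
      norm_num at hnrmU
    have hentry : ∃ i0 j0, U i0 j0 ≠ 0 := by
      by_contra hc2
      push_neg at hc2
      exact hUne (by ext i j; simpa using hc2 i j)
    obtain ⟨i0, j0, hij0⟩ := hentry
    set v : Vec n := fun i => U i j0 with hvdef
    have hvne : v ≠ 0 := by
      intro h0
      exact hij0 (by simpa [hvdef] using congrFun h0 i0)
    have hAv : A *ᵥ v = 0 := by
      ext i
      have hstep : (A *ᵥ v) i = (A * U) i j0 := by
        simp [Matrix.mulVec, dotProduct, Matrix.mul_apply, hvdef]
      rw [hstep, hAU]
      simp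
    set W : Submodule ℝ (Vec n) := LinearMap.ker (Matrix.mulVecLin A) with hWdef
    have hWinv : ∀ i, ∀ w ∈ W, (↑(rr i) : MatN n) *ᵥ w ∈ W := by
      intro i w hw
      rw [hWdef, LinearMap.mem_ker, Matrix.mulVecLin_apply] at hw ⊢
      rw [Matrix.mulVec_mulVec, hrel i, ← Matrix.mulVec_mulVec, hw, Matrix.mulVec_zero]
    have hWv : v ∈ W := by
      rw [hWdef, LinearMap.mem_ker, Matrix.mulVecLin_apply]
      exact hAv
    rcases hirr' W (closure_invariant rr W hWinv) with hbot | htop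
    · rw [hbot, Submodule.mem_bot] at hWv
      exact hvne hWv
    · have hA0 : A = 0 := by
        apply matrix_eq_of_mulVec (B := 0)
        intro v'
        have hv' : v' ∈ W := htop ▸ Submodule.mem_top
        rw [hWdef, LinearMap.mem_ker, Matrix.mulVecLin_apply] at hv'
        rw [hv', Matrix.zero_mulVec]
      rw [hA0, (nrm_eq_zero_iff (0 : MatN n)).mpr rfl] at hnrmA
      norm_num at hnrmA
  -- Step 2: `C` is compact
  obtain ⟨R, hR⟩ := hbound
  have hone : (1 : MatN n) ≠ 0 := by
    intro h0
    have h1 := congrFun (congrFun h0 0) 0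
    rw [Matrix.one_apply_eq] at h1
    have h2 : (1 : ℝ) = 0 := by simpa using h1
    exact one_ne_zero h2
  set B1 : Set (MatN n) := {A | ∀ i j, A i j ∈ Set.Icc (-(1 : ℝ)) 1} with hB1def
  set BR : Set (MatN n) := {A | ∀ i j, A i j ∈ Set.Icc (-R) R} with hBRdef
  have hFclosed : IsClosed {q : MatN n × MatN n × (Fin f → GL (Fin (n + 1)) ℝ) ×
      (Fin f → GL (Fin (n + 1)) ℝ) | q.1 * q.2.1 = 1 ∧ q.2.1 * q.1 = 1 ∧ nrm q.1 = 1 ∧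
      ∀ i, q.1 * (↑(q.2.2.1 i) : MatN n) = (↑(q.2.2.2 i) : MatN n) * q.1} := by
    have c1 : Continuous fun q : MatN n × MatN n × (Fin f → GL (Fin (n + 1)) ℝ) ×
        (Fin f → GL (Fin (n + 1)) ℝ) => q.1 := continuous_fst
    have c2 : Continuous fun q : MatN n × MatN n × (Fin f → GL (Fin (n + 1)) ℝ) ×
        (Fin f → GL (Fin (n + 1)) ℝ) => q.2.1 := continuous_fst.comp continuous_snd
    have cr : ∀ i, Continuous fun q : MatN n × MatN n × (Fin f → GL (Fin (n + 1)) ℝ) ×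
        (Fin f → GL (Fin (n + 1)) ℝ) => (↑(q.2.2.1 i) : MatN n) := fun i =>
      Units.continuous_val.comp ((continuous_apply i).comp
        (continuous_fst.comp (continuous_snd.comp continuous_snd)))
    have cs : ∀ i, Continuous fun q : MatN n × MatN n × (Fin f → GL (Fin (n + 1)) ℝ) ×
        (Fin f → GL (Fin (n + 1)) ℝ) => (↑(q.2.2.2 i) : MatN n) := fun i =>
      Units.continuous_val.comp ((continuous_apply i).comp
        (continuous_snd.comp (continuous_snd.comp continuous_snd)))
    have h1 := isClosed_eq (c1.mul c2) (continuous_const (y := (1 : MatN n)))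
    have h2 := isClosed_eq (c2.mul c1) (continuous_const (y := (1 : MatN n)))
    have h3 := isClosed_eq (continuous_nrm.comp c1) (continuous_const (y := (1 : ℝ)))
    have h4 : IsClosed {q : MatN n × MatN n × (Fin f → GL (Fin (n + 1)) ℝ) ×
        (Fin f → GL (Fin (n + 1)) ℝ) |
        ∀ i, q.1 * (↑(q.2.2.1 i) : MatN n) = (↑(q.2.2.2 i) : MatN n) * q.1} := by
      have hrepr : {q : MatN n × MatN n × (Fin f → GL (Fin (n + 1)) ℝ) ×
          (Fin f → GL (Fin (n + 1)) ℝ) |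
          ∀ i, q.1 * (↑(q.2.2.1 i) : MatN n) = (↑(q.2.2.2 i) : MatN n) * q.1}
          = ⋂ i, {q : MatN n × MatN n × (Fin f → GL (Fin (n + 1)) ℝ) ×
          (Fin f → GL (Fin (n + 1)) ℝ) |
          q.1 * (↑(q.2.2.1 i) : MatN n) = (↑(q.2.2.2 i) : MatN n) * q.1} := by
        ext q
        simp [Set.mem_iInter]
      rw [hrepr]
      exact isClosed_iInter fun i => isClosed_eq (c1.mul (cr i)) ((cs i).mul c1)
    exact h1.inter (h2.inter (h3.inter h4))
  have hbox : IsCompact (B1 ×ˢ BR ×ˢ K ×ˢ L) :=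
    (box_compact 1).prod ((box_compact R).prod (hK.prod hL))
  have hT : IsCompact ((B1 ×ˢ BR ×ˢ K ×ˢ L) ∩
      {q : MatN n × MatN n × (Fin f → GL (Fin (n + 1)) ℝ) ×
      (Fin f → GL (Fin (n + 1)) ℝ) | q.1 * q.2.1 = 1 ∧ q.2.1 * q.1 = 1 ∧ nrm q.1 = 1 ∧
      ∀ i, q.1 * (↑(q.2.2.1 i) : MatN n) = (↑(q.2.2.2 i) : MatN n) * q.1}) :=
    hbox.inter_right hFclosed
  have hπ : Continuous fun q : MatN n × MatN n × (Fin f → GL (Fin (n + 1)) ℝ) ×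
      (Fin f → GL (Fin (n + 1)) ℝ) => (q.1, q.2.1) :=
    continuous_fst.prodMk (continuous_fst.comp continuous_snd)
  have hTim := hT.image hπ
  have himg : (fun g : GL (Fin (n + 1)) ℝ => ((↑g : MatN n), (↑(g⁻¹) : MatN n))) '' C
      = (fun q : MatN n × MatN n × (Fin f → GL (Fin (n + 1)) ℝ) ×
      (Fin f → GL (Fin (n + 1)) ℝ) => (q.1, q.2.1)) ''
      ((B1 ×ˢ BR ×ˢ K ×ˢ L) ∩
      {q : MatN n × MatN n × (Fin f → GL (Fin (n + 1)) ℝ) ×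
      (Fin f → GL (Fin (n + 1)) ℝ) | q.1 * q.2.1 = 1 ∧ q.2.1 * q.1 = 1 ∧ nrm q.1 = 1 ∧
      ∀ i, q.1 * (↑(q.2.2.1 i) : MatN n) = (↑(q.2.2.2 i) : MatN n) * q.1}) := by
    apply Set.Subset.antisymm
    · rintro _ ⟨h, hh, rfl⟩
      obtain ⟨hn1, r0, hr0K, hr0L⟩ := hh
      refine ⟨((↑h : MatN n), (↑(h⁻¹) : MatN n), r0, fun i => h * r0 i * h⁻¹),
        ⟨⟨?_, ?_, hr0K, hr0L⟩, ?_, ?_, hn1, ?_⟩, rfl⟩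
      · intro i j
        rw [Set.mem_Icc, ← abs_le]
        calc |(↑h : MatN n) i j| ≤ nrm (↑h : MatN n) := abs_entry_le_nrm _ i j
          _ = 1 := hn1
      · intro i j
        rw [Set.mem_Icc, ← abs_le]
        exact hR h ⟨hn1, r0, hr0K, hr0L⟩ i j
      · rw [← Units.val_mul, mul_inv_cancel h, Units.val_one]
      · rw [← Units.val_mul, inv_mul_cancel h, Units.val_one]
      · intro i
        rw [← Units.val_mul, ← Units.val_mul]
        congr 1
        group
    · rintro _ ⟨⟨X, Y, r0, s0⟩, ⟨hbox', hXY, hYX, hnX, hrel0⟩, rfl⟩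
      refine ⟨⟨X, Y, hXY, hYX⟩, ⟨hnX, r0, hbox'.2.2.1, ?_⟩, rfl⟩
      have heq : (fun i => (⟨X, Y, hXY, hYX⟩ : GL (Fin (n + 1)) ℝ) * r0 i *
          (⟨X, Y, hXY, hYX⟩ : GL (Fin (n + 1)) ℝ)⁻¹) = s0 := by
        funext i
        apply Units.ext
        show X * (↑(r0 i) : MatN n) * Y = (↑(s0 i) : MatN n)
        rw [hrel0 i, mul_assoc, hXY, mul_one]
      rw [heq]
      exact hbox'.2.2.2
  have hCcomp : IsCompact C := by
    rw [glPairEmbedding.isCompact_iff, himg]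
    exact hTim
  -- Step 3: the image in the quotient coincides with the image of `C`
  have hkey : ∀ g : GL (Fin (n + 1)) ℝ, (∃ r ∈ K, (fun i => g * r i * g⁻¹) ∈ L) →
      ∃ h ∈ C, (QuotientGroup.mk g : GL (Fin (n + 1)) ℝ ⧸
        Subgroup.center (GL (Fin (n + 1)) ℝ)) = QuotientGroup.mk h := by
    intro g hg
    obtain ⟨r0, hr0K, hr0L⟩ := hg
    set cg : ℝ := nrm (↑g : MatN n) with hcgdef
    have hgne : (↑g : MatN n) ≠ 0 := by
      intro h0
      have h1 : (↑g : MatN n) * (↑(g⁻¹) : MatN n) = 1 := by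
        rw [← Units.val_mul, mul_inv_cancel g, Units.val_one]
      rw [h0, zero_mul] at h1
      exact hone h1.symm
    have hcgne : cg ≠ 0 := fun h0 => hgne ((nrm_eq_zero_iff _).mp h0)
    have hcgpos : 0 < cg := lt_of_le_of_ne (nrm_nonneg _) (Ne.symm hcgne)
    set uc : GL (Fin (n + 1)) ℝ := ⟨cg⁻¹ • 1, cg • 1,
      by rw [smul_mul_assoc, one_mul, smul_smul, inv_mul_cancel₀ hcgne, one_smul],
      by rw [smul_mul_assoc, one_mul, smul_smul, mul_inv_cancel₀ hcgne, one_smul]⟩ with hucdef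
    have hucval : (↑uc : MatN n) = cg⁻¹ • 1 := rfl
    have hucC : uc ∈ Subgroup.center (GL (Fin (n + 1)) ℝ) := scalar_unit_center cg⁻¹ uc hucval
    refine ⟨uc * g, ⟨?_, r0, hr0K, ?_⟩, ?_⟩
    · show nrm (↑(uc * g) : MatN n) = 1
      rw [Units.val_mul, hucval, smul_mul_assoc, one_mul, nrm_smul,
        abs_of_pos (inv_pos.mpr hcgpos), ← hcgdef, inv_mul_cancel₀ hcgne]
    · have heq : (fun i => (uc * g) * r0 i * (uc * g)⁻¹) = fun i => g * r0 i * g⁻¹ := by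
        funext i
        have hy := Subgroup.mem_center_iff.mp hucC (g * r0 i * g⁻¹)
        calc (uc * g) * r0 i * (uc * g)⁻¹ = uc * (g * r0 i * g⁻¹) * uc⁻¹ := by group
          _ = (g * r0 i * g⁻¹) * uc * uc⁻¹ := by rw [← hy]
          _ = g * r0 i * g⁻¹ := by rw [mul_inv_cancel_right]
      rw [heq]
      exact hr0L
    · rw [QuotientGroup.eq]
      have hy := Subgroup.mem_center_iff.mp hucC g⁻¹
      have hthis : g⁻¹ * (uc * g) = uc := by
        rw [← mul_assoc, hy, inv_mul_cancel_right]
      rw [hthis]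
      exact hucC
  have hSC : QuotientGroup.mk '' {g : GL (Fin (n + 1)) ℝ | ∃ r ∈ K, (fun i => g * r i * g⁻¹) ∈ L}
      = (QuotientGroup.mk '' C : Set (GL (Fin (n + 1)) ℝ ⧸
        Subgroup.center (GL (Fin (n + 1)) ℝ))) := by
    apply Set.Subset.antisymm
    · rintro _ ⟨g, hg, rfl⟩
      obtain ⟨h, hh, heq⟩ := hkey g hg
      exact ⟨h, hh, heq.symm⟩
    · rintro _ ⟨h, hh, rfl⟩
      exact ⟨h, hh.2, rfl⟩
  rw [hSC]
  exact hCcomp.image continuous_quotient_mk'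

end Lemma34Aux

/-- Lemma 3.4.  On the space `𝒰` of `f`-tuples of reflections in
`SL^±_{n+1}(ℝ)` generating an irreducible dividing reflection group, the conjugation action
of `PGL_{n+1}(ℝ)` is free (any element fixing a point is central, i.e. trivial in `PGL`) and
proper (the set of group elements moving a compact set into a compact set is compact in
`PGL_{n+1}(ℝ)`). -/
theorem pgl_conjugation_action_proper_and_free (n f : ℕ) :
    (∀ g : GL (Fin (n + 1)) ℝ, ∀ r ∈ UTuples n f,
      (fun i => g * r i * g⁻¹) = r → g ∈ Subgroup.center (GL (Fin (n + 1)) ℝ)) ∧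
    (∀ K L : Set (Fin f → GL (Fin (n + 1)) ℝ), K ⊆ UTuples n f → L ⊆ UTuples n f →
      IsCompact K → IsCompact L →
      IsCompact ((QuotientGroup.mk ''
          {g : GL (Fin (n + 1)) ℝ | ∃ r ∈ K, (fun i => g * r i * g⁻¹) ∈ L}) :
        Set (GL (Fin (n + 1)) ℝ ⧸ Subgroup.center (GL (Fin (n + 1)) ℝ)))) := by
  constructor
  · intro g r hr hfix
    apply freeness_core g r hr
    intro i
    have h := congrFun hfix i
    calc g * r i = (g * r i * g⁻¹) * g := by group
      _ = r i * g := by rw [h]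
  · intro K L hKU hLU hK hL
    exact properness_core K L hKU hK hL
end

section
/- Let P be a compact hyperbolic Coxeter n-polytope, P̂ the associated Coxeter orbifold, e₂ the number of ridges of order 2, b̄₀ the f-tuple of unit Lorentzian normal vectors to the facets, and ᾱ₀ the f-tuple of dual vectors α_i = 2⟨b_i, ·⟩. If P̂ is weakly orderable, then rank DΦ_P̂ at (ᾱ₀, b̄₀) equals rank DΨ_P̂ at b̄₀ plus e₂. -/
open Matrix
open scoped Classical

noncomputable section RankAux
open Module LinearMap
open scoped Classical

namespace RankAux

variable {n : ℕ}

lemma eta_mul_self (k : Fin (n+1)) : eta n k * eta n k = 1 := by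
  unfold eta; by_cases h : k = 0 <;> simp [h]

lemma lorentz_comm (x y : Vec n) : lorentz x y = lorentz y x := by
  unfold lorentz; exact Finset.sum_congr rfl fun k _ => by ring

lemma lorentz_add_left (x y z : Vec n) :
    lorentz (x + y) z = lorentz x z + lorentz y z := by
  unfold lorentz; rw [← Finset.sum_add_distrib]
  exact Finset.sum_congr rfl fun k _ => by simp only [Pi.add_apply]; ring

lemma lorentz_add_right (x y z : Vec n) :
    lorentz x (y + z) = lorentz x y + lorentz x z := by
  unfold lorentz; rw [← Finset.sum_add_distrib]
  exact Finset.sum_congr rfl fun k _ => by simp only [Pi.add_apply]; ring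

lemma lorentz_smul_left (c : ℝ) (x z : Vec n) :
    lorentz (c • x) z = c * lorentz x z := by
  unfold lorentz; rw [Finset.mul_sum]
  exact Finset.sum_congr rfl fun k _ => by simp only [Pi.smul_apply, smul_eq_mul]; ring

lemma lorentz_smul_right (c : ℝ) (x z : Vec n) :
    lorentz x (c • z) = c * lorentz x z := by
  unfold lorentz; rw [Finset.mul_sum]
  exact Finset.sum_congr rfl fun k _ => by simp only [Pi.smul_apply, smul_eq_mul]; ring

lemma alphaOf_dot (x y : Vec n) : alphaOf x ⬝ᵥ y = 2 * lorentz x y := by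
  unfold alphaOf lorentz dotProduct; rw [Finset.mul_sum]
  exact Finset.sum_congr rfl fun k _ => by ring

/-- half the metric dual: `a ⬝ᵥ v = 2 ⟨kappa a, v⟩`. -/
def kappa (a : Vec n) : Vec n := fun k => eta n k * a k / 2

lemma dot_eq_lorentz_kappa (a v : Vec n) : a ⬝ᵥ v = 2 * lorentz (kappa a) v := by
  unfold kappa lorentz dotProduct; rw [Finset.mul_sum]
  refine Finset.sum_congr rfl fun k _ => ?_
  have h := eta_mul_self (n := n) k
  linear_combination (-(a k * v k)) * h

lemma kappa_add (a b : Vec n) : kappa (a + b) = kappa a + kappa b := by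
  funext k; simp only [kappa, Pi.add_apply]; ring

lemma kappa_smul (c : ℝ) (a : Vec n) : kappa (c • a) = c • kappa a := by
  funext k; simp only [kappa, Pi.smul_apply, smul_eq_mul]; ring

lemma kappa_zero : kappa (0 : Vec n) = 0 := by
  funext k; simp [kappa]

/-- the dot-product functional. -/
def dotFunctional (w : Vec n) : Vec n →ₗ[ℝ] ℝ where
  toFun v := w ⬝ᵥ v
  map_add' x y := by simp [dotProduct_add]
  map_smul' c x := by simp

lemma sum_smul_dot {ι : Type*} [Fintype ι] (c : ι → ℝ) (a : ι → Vec n) (v : Vec n) :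
    (∑ j, c j • a j) ⬝ᵥ v = ∑ j, c j * (a j ⬝ᵥ v) := by
  have h1 : ∀ k, (∑ j, c j • a j) k * v k = ∑ j, c j * (a j k * v k) := by
    intro k
    rw [Finset.sum_apply, Finset.sum_mul]
    exact Finset.sum_congr rfl fun j _ => by simp only [Pi.smul_apply, smul_eq_mul]; ring
  calc (∑ j, c j • a j) ⬝ᵥ v = ∑ k, ∑ j, c j * (a j k * v k) :=
        Finset.sum_congr rfl (fun k _ => h1 k)
    _ = ∑ j, ∑ k, c j * (a j k * v k) := Finset.sum_comm
    _ = ∑ j, c j * (a j ⬝ᵥ v) :=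
        Finset.sum_congr rfl (fun j _ => by rw [dotProduct, Finset.mul_sum])

lemma dot_eval_surjective {ι : Type*} [Fintype ι] (a : ι → Vec n)
    (ha : LinearIndependent ℝ a) (r : ι → ℝ) : ∃ v : Vec n, ∀ j, a j ⬝ᵥ v = r j := by
  set E : Vec n →ₗ[ℝ] (ι → ℝ) := LinearMap.pi (fun j => dotFunctional (a j)) with hE
  have hsurj : Function.Surjective E := by
    rw [← LinearMap.dualMap_injective_iff, ← LinearMap.ker_eq_bot]
    rw [LinearMap.ker_eq_bot']
    intro ψ hψ
    set c : ι → ℝ := fun j => ψ (Pi.single j 1) with hc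
    have hexp : ∀ x : ι → ℝ, ψ x = ∑ j, x j * c j := by
      intro x
      have hx : x = ∑ j, x j • (Pi.single j (1:ℝ) : ι → ℝ) := by
        funext k
        simp [Finset.sum_apply, Pi.single_apply]
      conv_lhs => rw [hx]
      rw [map_sum]
      exact Finset.sum_congr rfl fun j _ => by rw [_root_.map_smul]; simp [hc]
    have hz : ∀ v : Vec n, (∑ j, c j • a j) ⬝ᵥ v = 0 := by
      intro v
      have h1 : ψ (E v) = 0 := by
        have := congrArg (fun g => g v) hψ
        simpa [LinearMap.dualMap_apply] using this
      rw [hexp (E v)] at h1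
      rw [sum_smul_dot, ← h1]
      refine Finset.sum_congr rfl fun j _ => ?_
      simp [hE, dotFunctional, LinearMap.pi_apply, mul_comm]
    have hzero : (∑ j, c j • a j) = 0 := by
      funext k
      have := hz (Pi.single k 1)
      simpa [dotProduct_single] using this
    have hc0 : ∀ j, c j = 0 := Fintype.linearIndependent_iff.mp ha c hzero
    refine LinearMap.ext fun x => ?_
    rw [hexp x]
    simp [hc0]
  obtain ⟨v, hv⟩ := hsurj r
  refine ⟨v, fun j => ?_⟩
  have := congrFun hv j
  simpa [hE, dotFunctional, LinearMap.pi_apply] using this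

lemma exists_lorentz_sol {ι : Type*} [Fintype ι] (g : ι → Vec n)
    (hg : LinearIndependent ℝ (fun j => alphaOf (g j))) (r : ι → ℝ) :
    ∃ v : Vec n, ∀ j, lorentz (g j) v = r j := by
  obtain ⟨v, hv⟩ := dot_eval_surjective (fun j => alphaOf (g j)) hg (fun j => 2 * r j)
  refine ⟨v, fun j => ?_⟩
  have := hv j
  rw [alphaOf_dot] at this
  linarith


section Deriv
variable {f : ℕ}

/-- the linearization of `p ↦ α_i(b_j)` at the hyperbolic point. -/
def uL (ν : Fin f → Vec n) (i j : Fin f) :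
    ((Fin f → Vec n) × (Fin f → Vec n)) →ₗ[ℝ] ℝ where
  toFun h := h.1 i ⬝ᵥ ν j + alphaOf (ν i) ⬝ᵥ h.2 j
  map_add' p q := by
    simp only [Prod.fst_add, Prod.snd_add, Pi.add_apply, add_dotProduct, dotProduct_add]; ring
  map_smul' c p := by
    simp only [Prod.smul_fst, Prod.smul_snd, Pi.smul_apply, smul_dotProduct, dotProduct_smul,
      smul_eq_mul, RingHom.id_apply]; ring

/-- the linearization of `b ↦ 2⟨b_i, b_j⟩` at `ν`. -/
def sL (ν : Fin f → Vec n) (i j : Fin f) : (Fin f → Vec n) →ₗ[ℝ] ℝ where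
  toFun b := 2 * lorentz (b i) (ν j) + 2 * lorentz (ν i) (b j)
  map_add' p q := by simp only [Pi.add_apply, lorentz_add_left, lorentz_add_right]; ring
  map_smul' c p := by
    simp only [Pi.smul_apply, lorentz_smul_left, lorentz_smul_right, smul_eq_mul,
      RingHom.id_apply]; ring

lemma hasFDeriv_dot (ν : Fin f → Vec n) (i j : Fin f) :
    HasFDerivAt (fun p : (Fin f → Vec n) × (Fin f → Vec n) => p.1 i ⬝ᵥ p.2 j)
      (LinearMap.toContinuousLinearMap (uL ν i j)) ((fun k => alphaOf (ν k), ν)) := by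
  set p₀ : (Fin f → Vec n) × (Fin f → Vec n) := (fun k => alphaOf (ν k), ν) with hp₀
  have base : ∀ k : Fin (n+1),
      HasFDerivAt (fun p : (Fin f → Vec n) × (Fin f → Vec n) => p.1 i k * p.2 j k)
        (alphaOf (ν i) k •
            ((ContinuousLinearMap.proj k).comp ((ContinuousLinearMap.proj j).comp
              (ContinuousLinearMap.snd ℝ (Fin f → Vec n) (Fin f → Vec n))))
          + ν j k •
            ((ContinuousLinearMap.proj k).comp ((ContinuousLinearMap.proj i).comp
              (ContinuousLinearMap.fst ℝ (Fin f → Vec n) (Fin f → Vec n))))) p₀ := by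
    intro k
    have h1 : HasFDerivAt (fun p : (Fin f → Vec n) × (Fin f → Vec n) => p.1 i k)
        ((ContinuousLinearMap.proj k).comp ((ContinuousLinearMap.proj i).comp
          (ContinuousLinearMap.fst ℝ (Fin f → Vec n) (Fin f → Vec n)))) p₀ :=
      ContinuousLinearMap.hasFDerivAt ((ContinuousLinearMap.proj k).comp
        ((ContinuousLinearMap.proj i).comp
          (ContinuousLinearMap.fst ℝ (Fin f → Vec n) (Fin f → Vec n))))
    have h2 : HasFDerivAt (fun p : (Fin f → Vec n) × (Fin f → Vec n) => p.2 j k)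
        ((ContinuousLinearMap.proj k).comp ((ContinuousLinearMap.proj j).comp
          (ContinuousLinearMap.snd ℝ (Fin f → Vec n) (Fin f → Vec n)))) p₀ :=
      ContinuousLinearMap.hasFDerivAt ((ContinuousLinearMap.proj k).comp
        ((ContinuousLinearMap.proj j).comp
          (ContinuousLinearMap.snd ℝ (Fin f → Vec n) (Fin f → Vec n))))
    exact h1.mul h2
  have hsum := HasFDerivAt.fun_sum (fun k (_ : k ∈ Finset.univ) => base k)
  have hfun : (fun p : (Fin f → Vec n) × (Fin f → Vec n) => p.1 i ⬝ᵥ p.2 j)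
      = fun p => ∑ k, p.1 i k * p.2 j k := rfl
  rw [hfun]
  refine hsum.congr_fderiv ?_
  refine (ContinuousLinearMap.ext fun p => ?_)
  simp only [LinearMap.coe_toContinuousLinearMap', uL, LinearMap.coe_mk, AddHom.coe_mk,
    ContinuousLinearMap.coe_sum', Finset.sum_apply, ContinuousLinearMap.add_apply,
    ContinuousLinearMap.coe_smul', Pi.smul_apply, ContinuousLinearMap.coe_comp',
    Function.comp_apply, ContinuousLinearMap.coe_snd', ContinuousLinearMap.coe_fst',
    ContinuousLinearMap.proj_apply, smul_eq_mul]
  rw [dotProduct, dotProduct, ← Finset.sum_add_distrib]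
  exact Finset.sum_congr rfl fun k _ => by ring

lemma hasFDeriv_lor (ν : Fin f → Vec n) (i j : Fin f) :
    HasFDerivAt (fun b : Fin f → Vec n => 2 * lorentz (b i) (b j))
      (LinearMap.toContinuousLinearMap (sL ν i j)) ν := by
  have base : ∀ k : Fin (n+1),
      HasFDerivAt (fun b : Fin f → Vec n => b i k * b j k)
        (ν i k • ((ContinuousLinearMap.proj k).comp
            (ContinuousLinearMap.proj (R := ℝ) (φ := fun _ : Fin f => Vec n) j))
          + ν j k • ((ContinuousLinearMap.proj k).comp
            (ContinuousLinearMap.proj (R := ℝ) (φ := fun _ : Fin f => Vec n) i))) ν := by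
    intro k
    have h1 : HasFDerivAt (fun b : Fin f → Vec n => b i k)
        ((ContinuousLinearMap.proj k).comp
          (ContinuousLinearMap.proj (R := ℝ) (φ := fun _ : Fin f => Vec n) i)) ν :=
      ContinuousLinearMap.hasFDerivAt ((ContinuousLinearMap.proj k).comp
        (ContinuousLinearMap.proj (R := ℝ) (φ := fun _ : Fin f => Vec n) i))
    have h2 : HasFDerivAt (fun b : Fin f → Vec n => b j k)
        ((ContinuousLinearMap.proj k).comp
          (ContinuousLinearMap.proj (R := ℝ) (φ := fun _ : Fin f => Vec n) j)) ν :=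
      ContinuousLinearMap.hasFDerivAt ((ContinuousLinearMap.proj k).comp
        (ContinuousLinearMap.proj (R := ℝ) (φ := fun _ : Fin f => Vec n) j))
    exact h1.mul h2
  have base2 : ∀ k : Fin (n+1), k ∈ Finset.univ →
      HasFDerivAt (fun b : Fin f → Vec n => (2 * eta n k) * (b i k * b j k))
        ((2 * eta n k) • (ν i k • ((ContinuousLinearMap.proj k).comp
            (ContinuousLinearMap.proj (R := ℝ) (φ := fun _ : Fin f => Vec n) j))
          + ν j k • ((ContinuousLinearMap.proj k).comp
            (ContinuousLinearMap.proj (R := ℝ) (φ := fun _ : Fin f => Vec n) i)))) ν :=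
    fun k _ => (base k).const_mul _
  have hsum := HasFDerivAt.fun_sum base2
  have hfun : (fun b : Fin f → Vec n => 2 * lorentz (b i) (b j))
      = fun b => ∑ k, (2 * eta n k) * (b i k * b j k) := by
    funext b
    rw [lorentz, Finset.mul_sum]
    exact Finset.sum_congr rfl fun k _ => by ring
  rw [hfun]
  refine hsum.congr_fderiv ?_
  refine (ContinuousLinearMap.ext fun b => ?_)
  simp only [LinearMap.coe_toContinuousLinearMap', sL, LinearMap.coe_mk, AddHom.coe_mk,
    ContinuousLinearMap.coe_sum', Finset.sum_apply, ContinuousLinearMap.add_apply,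
    ContinuousLinearMap.coe_smul', Pi.smul_apply, ContinuousLinearMap.coe_comp',
    Function.comp_apply, ContinuousLinearMap.proj_apply, smul_eq_mul]
  rw [lorentz, lorentz, Finset.mul_sum, Finset.mul_sum, ← Finset.sum_add_distrib]
  exact Finset.sum_congr rfl fun k _ => by ring

end Deriv

section Maps
variable (Q : HypData n)

/-- the derivative of `Φ` at the hyperbolic point. -/
def TD : ((Fin Q.f → Vec n) × (Fin Q.f → Vec n)) →L[ℝ]
    (Fin Q.f → ℝ) × (Fin Q.f → Fin Q.f → ℝ) × (Fin Q.f → Fin Q.f → ℝ) :=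
  (ContinuousLinearMap.pi fun i => LinearMap.toContinuousLinearMap (uL Q.ν i i)).prod
  ((ContinuousLinearMap.pi fun i => ContinuousLinearMap.pi fun j =>
      if i ≠ j ∧ Q.Adj i j ∧ Q.ord i j = 2 then
        LinearMap.toContinuousLinearMap (uL Q.ν i j) else 0).prod
   (ContinuousLinearMap.pi fun i => ContinuousLinearMap.pi fun j =>
      if i < j ∧ Q.Adj i j ∧ 3 ≤ Q.ord i j then
        (alphaOf (Q.ν i) ⬝ᵥ Q.ν j) • LinearMap.toContinuousLinearMap (uL Q.ν j i)
          + (alphaOf (Q.ν j) ⬝ᵥ Q.ν i) • LinearMap.toContinuousLinearMap (uL Q.ν i j)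
      else 0))

lemma TD_apply (x : (Fin Q.f → Vec n) × (Fin Q.f → Vec n)) :
    TD Q x = (fun i => uL Q.ν i i x,
      fun i j => if i ≠ j ∧ Q.Adj i j ∧ Q.ord i j = 2 then uL Q.ν i j x else 0,
      fun i j => if i < j ∧ Q.Adj i j ∧ 3 ≤ Q.ord i j then
        (alphaOf (Q.ν i) ⬝ᵥ Q.ν j) * uL Q.ν j i x + (alphaOf (Q.ν j) ⬝ᵥ Q.ν i) * uL Q.ν i j x
      else 0) := by
  refine Prod.ext ?_ (Prod.ext ?_ ?_)
  · funext i
    simp [TD]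
  · funext i j
    by_cases h : i ≠ j ∧ Q.Adj i j ∧ Q.ord i j = 2 <;>
      simp [TD, h]
  · funext i j
    by_cases h : i < j ∧ Q.Adj i j ∧ 3 ≤ Q.ord i j <;>
      simp [TD, h]

/-- the derivative of `Ψ` at `ν`. -/
def SD : (Fin Q.f → Vec n) →L[ℝ] (Fin Q.f → ℝ) × (Fin Q.f → Fin Q.f → ℝ) :=
  (ContinuousLinearMap.pi fun i => LinearMap.toContinuousLinearMap (sL Q.ν i i)).prod
  (ContinuousLinearMap.pi fun i => ContinuousLinearMap.pi fun j =>
     if i < j ∧ Q.Adj i j then LinearMap.toContinuousLinearMap (sL Q.ν i j) else 0)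

lemma SD_apply (b : Fin Q.f → Vec n) :
    SD Q b = (fun i => sL Q.ν i i b,
      fun i j => if i < j ∧ Q.Adj i j then sL Q.ν i j b else 0) := by
  refine Prod.ext ?_ ?_
  · funext i; simp [SD]
  · funext i j
    by_cases h : i < j ∧ Q.Adj i j <;> simp [SD, h]

lemma hasFDeriv_Phi :
    HasFDerivAt (PhiMap n Q.f Q.Adj Q.ord) (TD Q) Q.hypPoint := by
  unfold PhiMap TD HypData.hypPoint
  apply HasFDerivAt.prodMk
  · exact hasFDerivAt_pi.2 fun i => (hasFDeriv_dot Q.ν i i).sub_const 2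
  apply HasFDerivAt.prodMk
  · refine hasFDerivAt_pi.2 fun i => hasFDerivAt_pi.2 fun j => ?_
    by_cases h : i ≠ j ∧ Q.Adj i j ∧ Q.ord i j = 2
    · simp only [if_pos h]; exact hasFDeriv_dot Q.ν i j
    · simp only [if_neg h]; exact hasFDerivAt_const 0 _
  · refine hasFDerivAt_pi.2 fun i => hasFDerivAt_pi.2 fun j => ?_
    by_cases h : i < j ∧ Q.Adj i j ∧ 3 ≤ Q.ord i j
    · simp only [if_pos h]
      exact ((hasFDeriv_dot Q.ν i j).mul (hasFDeriv_dot Q.ν j i)).sub_const _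
    · simp only [if_neg h]; exact hasFDerivAt_const 0 _

lemma hasFDeriv_Psi :
    HasFDerivAt (PsiMap n Q.f Q.Adj Q.ord) (SD Q) Q.ν := by
  unfold PsiMap SD
  apply HasFDerivAt.prodMk
  · exact hasFDerivAt_pi.2 fun i => (hasFDeriv_lor Q.ν i i).sub_const 2
  · refine hasFDerivAt_pi.2 fun i => hasFDerivAt_pi.2 fun j => ?_
    by_cases h : i < j ∧ Q.Adj i j
    · simp only [if_pos h]; exact (hasFDeriv_lor Q.ν i j).add_const _
    · simp only [if_neg h]; exact hasFDerivAt_const 0 _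

end Maps


section Identity
variable (Q : HypData n)

lemma adj_symm {i j : Fin Q.f} (h : Q.Adj i j) : Q.Adj j i := by
  obtain ⟨hne, x, hx, h1, h2⟩ := h
  exact ⟨hne.symm, x, hx, h2, h1⟩

lemma c_symm (i j : Fin Q.f) : alphaOf (Q.ν j) ⬝ᵥ Q.ν i = alphaOf (Q.ν i) ⬝ᵥ Q.ν j := by
  rw [alphaOf_dot, alphaOf_dot, lorentz_comm]

lemma c_val (hQ : Q.IsCoxeter) {i j : Fin Q.f} (h : Q.Adj i j) :
    alphaOf (Q.ν i) ⬝ᵥ Q.ν j = -2 * Real.cos (Real.pi / Q.ord i j) := by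
  rw [alphaOf_dot, (hQ.2.2.2.2.2 i j h).2]; ring

lemma c_ne (hQ : Q.IsCoxeter) {i j : Fin Q.f} (h : Q.Adj i j) (h3 : 3 ≤ Q.ord i j) :
    alphaOf (Q.ν i) ⬝ᵥ Q.ν j ≠ 0 := by
  rw [c_val Q hQ h]
  have hm : (2:ℝ) < (Q.ord i j : ℝ) := by exact_mod_cast (by omega : 2 < Q.ord i j)
  have h1 : 0 < Real.cos (Real.pi / Q.ord i j) := by
    apply Real.cos_pos_of_mem_Ioo
    constructor
    · have : 0 < Real.pi / (Q.ord i j : ℝ) := div_pos Real.pi_pos (by linarith)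
      linarith [Real.pi_pos]
    · exact div_lt_div_of_pos_left Real.pi_pos (by norm_num) hm
  intro hc
  nlinarith

/-- the comparison map from the codomain of `Φ` to the codomain of `Ψ`. -/
def piL : ((Fin Q.f → ℝ) × (Fin Q.f → Fin Q.f → ℝ) × (Fin Q.f → Fin Q.f → ℝ)) →ₗ[ℝ]
    (Fin Q.f → ℝ) × (Fin Q.f → Fin Q.f → ℝ) where
  toFun v := (fun i => 2 * v.1 i,
    fun i j => if i < j ∧ Q.Adj i j then
      (if Q.ord i j = 2 then v.2.1 i j + v.2.1 j i
       else (alphaOf (Q.ν i) ⬝ᵥ Q.ν j)⁻¹ * v.2.2 i j)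
    else 0)
  map_add' p q := by
    refine Prod.ext (funext fun i => ?_) (funext fun i => funext fun j => ?_)
    · simp only [Prod.fst_add, Pi.add_apply]; ring
    · simp only [Prod.fst_add, Prod.snd_add, Pi.add_apply]
      split_ifs <;> ring
  map_smul' c p := by
    refine Prod.ext (funext fun i => ?_) (funext fun i => funext fun j => ?_)
    · simp only [Prod.smul_fst, Pi.smul_apply, RingHom.id_apply, smul_eq_mul]; ring
    · simp only [Prod.smul_fst, Prod.smul_snd, Pi.smul_apply, RingHom.id_apply, smul_eq_mul]
      split_ifs <;> ring

/-- the change of variables `(α̇, ḃ) ↦ κ(α̇) + ḃ`. -/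
def LL : ((Fin Q.f → Vec n) × (Fin Q.f → Vec n)) →ₗ[ℝ] (Fin Q.f → Vec n) where
  toFun x := fun i => kappa (x.1 i) + x.2 i
  map_add' p q := by
    funext i
    simp only [Prod.fst_add, Prod.snd_add, Pi.add_apply, kappa_add]
    abel
  map_smul' c p := by
    funext i
    simp only [Prod.smul_fst, Prod.smul_snd, Pi.smul_apply, kappa_smul, RingHom.id_apply,
      smul_add]

lemma LL_surj : Function.Surjective (LL Q) := fun b =>
  ⟨(0, b), by funext i; simp [LL, kappa_zero]⟩

lemma uL_add_eq (x : (Fin Q.f → Vec n) × (Fin Q.f → Vec n)) (i j : Fin Q.f) :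
    uL Q.ν i j x + uL Q.ν j i x = sL Q.ν i j (LL Q x) := by
  simp only [uL, sL, LL, LinearMap.coe_mk, AddHom.coe_mk]
  rw [dot_eq_lorentz_kappa (x.1 i), dot_eq_lorentz_kappa (x.1 j), alphaOf_dot, alphaOf_dot,
    lorentz_add_left, lorentz_add_right]
  have e1 := lorentz_comm (kappa (x.1 j)) (Q.ν i)
  have e2 := lorentz_comm (x.2 i) (Q.ν j)
  linarith

lemma key_identity (hQ : Q.IsCoxeter) :
    (piL Q).comp (TD Q).toLinearMap = (SD Q).toLinearMap.comp (LL Q) := by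
  refine LinearMap.ext fun x => ?_
  simp only [LinearMap.comp_apply, ContinuousLinearMap.coe_coe]
  rw [TD_apply, SD_apply]
  simp only [piL, LinearMap.coe_mk, AddHom.coe_mk]
  refine Prod.ext (funext fun i => ?_) (funext fun i => funext fun j => ?_)
  · have := uL_add_eq Q x i i
    show 2 * uL Q.ν i i x = sL Q.ν i i (LL Q x)
    linarith
  · show (if i < j ∧ Q.Adj i j then
        (if Q.ord i j = 2 then
          (if i ≠ j ∧ Q.Adj i j ∧ Q.ord i j = 2 then uL Q.ν i j x else 0)
            + (if j ≠ i ∧ Q.Adj j i ∧ Q.ord j i = 2 then uL Q.ν j i x else 0)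
         else (alphaOf (Q.ν i) ⬝ᵥ Q.ν j)⁻¹ *
           (if i < j ∧ Q.Adj i j ∧ 3 ≤ Q.ord i j then
              alphaOf (Q.ν i) ⬝ᵥ Q.ν j * uL Q.ν j i x
                + alphaOf (Q.ν j) ⬝ᵥ Q.ν i * uL Q.ν i j x
            else 0))
      else 0) = (if i < j ∧ Q.Adj i j then sL Q.ν i j (LL Q x) else 0)
    by_cases hA : i < j ∧ Q.Adj i j
    · rw [if_pos hA, if_pos hA]
      by_cases h2 : Q.ord i j = 2
      · rw [if_pos h2, if_pos ⟨ne_of_lt hA.1, hA.2, h2⟩,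
          if_pos ⟨(ne_of_lt hA.1).symm, adj_symm Q hA.2, by rw [hQ.2.1]; exact h2⟩]
        exact uL_add_eq Q x i j
      · have h3 : 3 ≤ Q.ord i j := by
          have := (hQ.2.2.2.2.2 i j hA.2).1; omega
        rw [if_neg h2, if_pos ⟨hA.1, hA.2, h3⟩, c_symm Q i j]
        have hc := c_ne Q hQ hA.2 h3
        rw [← uL_add_eq Q x i j]
        field_simp
        ring
    · rw [if_neg hA, if_neg hA]

end Identity

section Bookkeeping

lemma finrank_map_add_inf_ker {Y W : Type*} [AddCommGroup Y] [Module ℝ Y]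
    [FiniteDimensional ℝ Y] [AddCommGroup W] [Module ℝ W]
    (p : Submodule ℝ Y) (g : Y →ₗ[ℝ] W) :
    finrank ℝ ↥(p.map g) + finrank ℝ ↥(p ⊓ LinearMap.ker g) = finrank ℝ ↥p := by
  have h := LinearMap.finrank_range_add_finrank_ker (g.domRestrict p)
  rw [LinearMap.range_domRestrict, LinearMap.ker_domRestrict] at h
  have heq : (LinearMap.ker g).comap p.subtype = (p ⊓ LinearMap.ker g).comap p.subtype := by
    ext x
    simp [Submodule.mem_comap, x.2]
  rw [heq, (Submodule.comapSubtypeEquivOfLe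
    (inf_le_left : p ⊓ LinearMap.ker g ≤ p)).finrank_eq] at h
  exact h

end Bookkeeping


section E2
variable (Q : HypData n)

/-- the space of antisymmetric matrices supported on the order-2 ridges. -/
def AntiSub : Submodule ℝ (Fin Q.f → Fin Q.f → ℝ) where
  carrier := {y | (∀ i j, ¬(i ≠ j ∧ Q.Adj i j ∧ Q.ord i j = 2) → y i j = 0) ∧
    (∀ i j, y j i = - y i j)}
  add_mem' := by
    rintro a b ⟨ha1, ha2⟩ ⟨hb1, hb2⟩
    refine ⟨fun i j h => ?_, fun i j => ?_⟩
    · simp only [Pi.add_apply, ha1 i j h, hb1 i j h, add_zero]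
    · simp only [Pi.add_apply, ha2 i j, hb2 i j]; ring
  zero_mem' := ⟨fun i j h => rfl, fun i j => by simp⟩
  smul_mem' := by
    rintro c y ⟨h1, h2⟩
    refine ⟨fun i j h => ?_, fun i j => ?_⟩
    · simp only [Pi.smul_apply, h1 i j h, smul_eq_mul, mul_zero]
    · simp only [Pi.smul_apply, h2 i j, smul_eq_mul]; ring

lemma mem_AntiSub {y : Fin Q.f → Fin Q.f → ℝ} : y ∈ AntiSub Q ↔
    (∀ i j, ¬(i ≠ j ∧ Q.Adj i j ∧ Q.ord i j = 2) → y i j = 0) ∧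
    (∀ i j, y j i = - y i j) := Iff.rfl

lemma finrank_AntiSub (hQ : Q.IsCoxeter) : finrank ℝ ↥(AntiSub Q) = Q.e2 := by
  classical
  set Sp : Set (Fin Q.f × Fin Q.f) :=
    {q | q.1 < q.2 ∧ Q.Adj q.1 q.2 ∧ Q.ord q.1 q.2 = 2} with hSp
  let F : ↥(AntiSub Q) →ₗ[ℝ] (↥Sp → ℝ) :=
    { toFun := fun y q => (y : Fin Q.f → Fin Q.f → ℝ) q.1.1 q.1.2
      map_add' := fun a b => by funext q; simp
      map_smul' := fun c a => by funext q; simp }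
  have hinj : Function.Injective F := by
    rw [← LinearMap.ker_eq_bot, LinearMap.ker_eq_bot']
    intro y hy0
    obtain ⟨h1, h2⟩ := (mem_AntiSub Q).mp y.2
    have hval : ∀ q : Fin Q.f × Fin Q.f, q ∈ Sp → (y : Fin Q.f → Fin Q.f → ℝ) q.1 q.2 = 0 :=
      fun q hq => congrFun hy0 ⟨q, hq⟩
    refine Subtype.ext (funext fun i => funext fun j => ?_)
    simp only [ZeroMemClass.coe_zero, Pi.zero_apply]
    by_cases hc : i ≠ j ∧ Q.Adj i j ∧ Q.ord i j = 2
    · rcases lt_or_gt_of_ne hc.1 with hlt | hgt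
      · exact hval (i, j) ⟨hlt, hc.2⟩
      · have h0 : (y : Fin Q.f → Fin Q.f → ℝ) j i = 0 :=
          hval (j, i) ⟨hgt, adj_symm Q hc.2.1, by rw [hQ.2.1]; exact hc.2.2⟩
        have := h2 j i
        rw [h0] at this
        simpa using this
    · exact h1 i j hc
  have hsurj : Function.Surjective F := by
    intro t
    set y : Fin Q.f → Fin Q.f → ℝ := fun i j =>
      if h : (i, j) ∈ Sp then t ⟨(i, j), h⟩
      else if h' : (j, i) ∈ Sp then - t ⟨(j, i), h'⟩ else 0 with hy
    have hmem : y ∈ AntiSub Q := by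
      refine (mem_AntiSub Q).mpr ⟨fun i j h => ?_, fun i j => ?_⟩
      · have h1 : (i, j) ∉ Sp := fun hm => h ⟨ne_of_lt hm.1, hm.2⟩
        have h2 : (j, i) ∉ Sp := fun hm =>
          h ⟨(ne_of_lt hm.1).symm, adj_symm Q hm.2.1, by rw [hQ.2.1]; exact hm.2.2⟩
        simp [hy, h1, h2]
      · rcases lt_trichotomy i j with hlt | heq | hgt
        · have h2' : (j, i) ∉ Sp := fun hm' => absurd hlt (lt_asymm hm'.1)
          by_cases hm : (i, j) ∈ Sp <;> simp [hy, hm, h2']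
        · subst heq
          have : (i, i) ∉ Sp := fun hm => lt_irrefl _ hm.1
          simp [hy, this]
        · have h2' : (i, j) ∉ Sp := fun hm' => absurd hgt (lt_asymm hm'.1)
          by_cases hm : (j, i) ∈ Sp <;> simp [hy, hm, h2']
    refine ⟨⟨y, hmem⟩, ?_⟩
    funext q
    obtain ⟨⟨i, j⟩, hq⟩ := q
    show y i j = t ⟨(i, j), hq⟩
    simp [hy, hq]
  have h1 := LinearEquiv.finrank_eq (LinearEquiv.ofBijective F ⟨hinj, hsurj⟩)
  rw [h1, Module.finrank_pi]
  show Fintype.card ↥Sp = Q.e2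
  have himg : Q.ridges2 = (fun q : Fin Q.f × Fin Q.f => s(q.1, q.2)) '' Sp := by
    ext p
    simp only [HypData.ridges2, Set.mem_setOf_eq, Set.mem_image]
    constructor
    · rintro ⟨i, j, rfl, hadj, h2⟩
      rcases lt_or_gt_of_ne hadj.1 with hlt | hgt
      · exact ⟨(i, j), ⟨hlt, hadj, h2⟩, rfl⟩
      · exact ⟨(j, i), ⟨hgt, adj_symm Q hadj, by rw [hQ.2.1]; exact h2⟩, Sym2.eq_swap⟩
    · rintro ⟨⟨i, j⟩, ⟨hlt, hadj, h2⟩, rfl⟩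
      exact ⟨i, j, rfl, hadj, h2⟩
  have hinjOn : Set.InjOn (fun q : Fin Q.f × Fin Q.f => s(q.1, q.2)) Sp := by
    rintro ⟨a, b⟩ ⟨ha1, -, -⟩ ⟨c, d⟩ ⟨hc1, -, -⟩ h
    simp only [Sym2.eq, Sym2.rel_iff', Prod.mk.injEq, Prod.swap_prod_mk] at h
    rcases h with ⟨rfl, rfl⟩ | ⟨rfl, rfl⟩
    · rfl
    · exact absurd (ha1.trans hc1) (lt_irrefl _)
  rw [HypData.e2, himg, Set.ncard_image_of_injOn hinjOn, Set.ncard_eq_toFinset_card',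
    Set.toFinset_card]

lemma exists_w (hQ : Q.IsCoxeter) (σ : Fin Q.f ≃ Fin Q.f)
    (hli : ∀ i, LinearIndependent ℝ
      (fun j : {j // σ i < σ j ∧ Q.Adj i j ∧ Q.ord i j = 2} => alphaOf (Q.ν j)))
    (y : Fin Q.f → Fin Q.f → ℝ) (hy : y ∈ AntiSub Q) :
    ∃ w : Fin Q.f → Vec n, ∀ i j, i ≠ j → Q.Adj i j → Q.ord i j = 2 →
      2 * lorentz (Q.ν i) (w j) - 2 * lorentz (w i) (Q.ν j) = y i j := by
  classical
  obtain ⟨hy1, hy2⟩ := (mem_AntiSub Q).mp hy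
  have main : ∀ k : ℕ, ∃ w : Fin Q.f → Vec n, ∀ i j : Fin Q.f, Q.f - k ≤ (σ i : ℕ) →
      σ i < σ j → Q.Adj i j → Q.ord i j = 2 →
      2 * lorentz (Q.ν i) (w j) - 2 * lorentz (w i) (Q.ν j) = y i j := by
    intro k
    induction k with
    | zero =>
      refine ⟨0, fun i j h1 _ _ _ => absurd h1 ?_⟩
      have := (σ i).isLt
      omega
    | succ k ih =>
      obtain ⟨w, hw⟩ := ih
      by_cases hk : Q.f - (k + 1) = Q.f - k
      · exact ⟨w, fun i j h1 => hw i j (by omega)⟩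
      · have hkf : k < Q.f := by omega
        have hp : Q.f - (k + 1) < Q.f := by omega
        obtain ⟨i₀, hσi₀⟩ : ∃ i₀ : Fin Q.f, (σ i₀ : ℕ) = Q.f - (k + 1) :=
          ⟨σ.symm ⟨Q.f - (k + 1), hp⟩, by rw [Equiv.apply_symm_apply]⟩
        obtain ⟨v, hv⟩ := exists_lorentz_sol
          (fun j : {j // σ i₀ < σ j ∧ Q.Adj i₀ j ∧ Q.ord i₀ j = 2} => Q.ν j) (hli i₀)
          (fun j => lorentz (Q.ν i₀) (w j) - y i₀ j / 2)
        refine ⟨Function.update w i₀ v, fun i j h1 h2 h3 h4 => ?_⟩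
        have h2' : (σ i : ℕ) < (σ j : ℕ) := h2
        have hj : j ≠ i₀ := by
          intro hji
          rw [hji] at h2'
          omega
        rw [Function.update_of_ne hj]
        by_cases hii : i = i₀
        · subst hii
          rw [Function.update_self]
          have hvj := hv ⟨j, h2, h3, h4⟩
          have e := lorentz_comm v (Q.ν j)
          simp only at hvj
          linarith
        · rw [Function.update_of_ne hii]
          refine hw i j ?_ h2 h3 h4
          have hi' : (σ i : ℕ) ≠ Q.f - (k + 1) := by
            intro hval
            exact hii (σ.injective (Fin.ext (hval.trans hσi₀.symm)))
          omega
  obtain ⟨w, hw⟩ := main Q.f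
  refine ⟨w, fun i j hne hadj h2 => ?_⟩
  rcases lt_trichotomy (σ i) (σ j) with hlt | heq | hgt
  · exact hw i j (by omega) hlt hadj h2
  · exact absurd (σ.injective heq) hne
  · have hji := hw j i (by omega) hgt (adj_symm Q hadj) (by rw [hQ.2.1]; exact h2)
    have e1 := lorentz_comm (Q.ν i) (w j)
    have e2 := lorentz_comm (Q.ν j) (w i)
    have e3 := lorentz_comm (w i) (Q.ν j)
    have e4 := lorentz_comm (w j) (Q.ν i)
    have hyj := hy2 i j
    linarith

lemma finrank_inf (hQ : Q.IsCoxeter) (σ : Fin Q.f ≃ Fin Q.f)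
    (hli : ∀ i, LinearIndependent ℝ
      (fun j : {j // σ i < σ j ∧ Q.Adj i j ∧ Q.ord i j = 2} => alphaOf (Q.ν j))) :
    finrank ℝ ↥(LinearMap.range (TD Q).toLinearMap ⊓ LinearMap.ker (piL Q)) = Q.e2 := by
  classical
  rw [← finrank_AntiSub Q hQ]
  set K : Submodule ℝ ((Fin Q.f → ℝ) × (Fin Q.f → Fin Q.f → ℝ) × (Fin Q.f → Fin Q.f → ℝ)) :=
    LinearMap.range (TD Q).toLinearMap ⊓ LinearMap.ker (piL Q) with hK
  set P2 : ((Fin Q.f → ℝ) × (Fin Q.f → Fin Q.f → ℝ) × (Fin Q.f → Fin Q.f → ℝ)) →ₗ[ℝ]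
      (Fin Q.f → Fin Q.f → ℝ) :=
    (LinearMap.fst ℝ (Fin Q.f → Fin Q.f → ℝ) (Fin Q.f → Fin Q.f → ℝ)).comp
      (LinearMap.snd ℝ (Fin Q.f → ℝ) ((Fin Q.f → Fin Q.f → ℝ) × (Fin Q.f → Fin Q.f → ℝ)))
    with hP2
  -- extraction of the kernel equations
  have kerEq : ∀ u : (Fin Q.f → ℝ) × (Fin Q.f → Fin Q.f → ℝ) × (Fin Q.f → Fin Q.f → ℝ),
      piL Q u = 0 → (∀ i, 2 * u.1 i = 0) ∧
      (∀ i j, i < j → Q.Adj i j → Q.ord i j = 2 → u.2.1 i j + u.2.1 j i = 0) ∧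
      (∀ i j, i < j → Q.Adj i j → Q.ord i j ≠ 2 →
        (alphaOf (Q.ν i) ⬝ᵥ Q.ν j)⁻¹ * u.2.2 i j = 0) := by
    intro u hu
    refine ⟨fun i => ?_, fun i j hlt hadj h2 => ?_, fun i j hlt hadj h2 => ?_⟩
    · have := congrFun (congrArg Prod.fst hu) i
      simpa only [piL, LinearMap.coe_mk, AddHom.coe_mk, Prod.fst_zero, Pi.zero_apply] using this
    · have h := congrFun (congrFun (congrArg Prod.snd hu) i) j
      simp only [piL, LinearMap.coe_mk, AddHom.coe_mk, Prod.snd_zero, Pi.zero_apply] at h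
      rwa [if_pos ⟨hlt, hadj⟩, if_pos h2] at h
    · have h := congrFun (congrFun (congrArg Prod.snd hu) i) j
      simp only [piL, LinearMap.coe_mk, AddHom.coe_mk, Prod.snd_zero, Pi.zero_apply] at h
      rwa [if_pos ⟨hlt, hadj⟩, if_neg h2] at h
  have hmem' : ∀ u : (Fin Q.f → ℝ) × (Fin Q.f → Fin Q.f → ℝ) × (Fin Q.f → Fin Q.f → ℝ),
      u ∈ K → P2 u ∈ AntiSub Q := by
    intro u hu
    obtain ⟨hrange, hker⟩ := Submodule.mem_inf.mp hu
    obtain ⟨x, hx⟩ := hrange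
    have h21 : ∀ i j, u.2.1 i j
        = if i ≠ j ∧ Q.Adj i j ∧ Q.ord i j = 2 then uL Q.ν i j x else 0 := by
      intro i j
      rw [← hx]
      simp only [ContinuousLinearMap.coe_coe]
      rw [TD_apply]
    obtain ⟨k1, k2, k3⟩ := kerEq u (LinearMap.mem_ker.mp hker)
    refine (mem_AntiSub Q).mpr ⟨fun i j h => ?_, fun i j => ?_⟩
    · show u.2.1 i j = 0
      rw [h21, if_neg h]
    · show u.2.1 j i = - u.2.1 i j
      by_cases hc : i ≠ j ∧ Q.Adj i j ∧ Q.ord i j = 2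
      · rcases lt_or_gt_of_ne hc.1 with hlt | hgt
        · have := k2 i j hlt hc.2.1 hc.2.2
          linarith
        · have := k2 j i hgt (adj_symm Q hc.2.1) (by rw [hQ.2.1]; exact hc.2.2)
          linarith
      · have hc' : ¬(j ≠ i ∧ Q.Adj j i ∧ Q.ord j i = 2) := by
          intro h'
          exact hc ⟨h'.1.symm, adj_symm Q h'.2.1, by rw [← hQ.2.1]; exact h'.2.2⟩
        rw [h21, h21, if_neg hc, if_neg hc']
        ring
  have hinj' : ∀ u : (Fin Q.f → ℝ) × (Fin Q.f → Fin Q.f → ℝ) × (Fin Q.f → Fin Q.f → ℝ),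
      u ∈ K → P2 u = 0 → u = 0 := by
    intro u hu hy0
    obtain ⟨hrange, hker⟩ := Submodule.mem_inf.mp hu
    obtain ⟨x, hx⟩ := hrange
    obtain ⟨k1, k2, k3⟩ := kerEq u (LinearMap.mem_ker.mp hker)
    have h22 : ∀ i j, u.2.2 i j
        = if i < j ∧ Q.Adj i j ∧ 3 ≤ Q.ord i j then
            alphaOf (Q.ν i) ⬝ᵥ Q.ν j * uL Q.ν j i x
              + alphaOf (Q.ν j) ⬝ᵥ Q.ν i * uL Q.ν i j x else 0 := by
      intro i j
      rw [← hx]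
      simp only [ContinuousLinearMap.coe_coe]
      rw [TD_apply]
    refine Prod.ext (funext fun i => ?_)
      (Prod.ext ?_ (funext fun i => funext fun j => ?_))
    · show u.1 i = (0 : (Fin Q.f → ℝ) × (Fin Q.f → Fin Q.f → ℝ) ×
        (Fin Q.f → Fin Q.f → ℝ)).1 i
      simp only [Prod.fst_zero, Pi.zero_apply]
      have := k1 i
      linarith
    · show u.2.1 = (0 : (Fin Q.f → ℝ) × (Fin Q.f → Fin Q.f → ℝ) ×
        (Fin Q.f → Fin Q.f → ℝ)).2.1
      exact hy0
    · show u.2.2 i j = (0 : (Fin Q.f → ℝ) × (Fin Q.f → Fin Q.f → ℝ) ×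
        (Fin Q.f → Fin Q.f → ℝ)).2.2 i j
      simp only [Prod.snd_zero, Pi.zero_apply]
      by_cases hc : i < j ∧ Q.Adj i j ∧ 3 ≤ Q.ord i j
      · have hne2 : Q.ord i j ≠ 2 := by omega
        have h0 := k3 i j hc.1 hc.2.1 hne2
        have hcne : (alphaOf (Q.ν i) ⬝ᵥ Q.ν j)⁻¹ ≠ 0 :=
          inv_ne_zero (c_ne Q hQ hc.2.1 hc.2.2)
        rcases mul_eq_zero.mp h0 with h | h
        · exact absurd h hcne
        · exact h
      · rw [h22, if_neg hc]
  let F : ↥K →ₗ[ℝ] ↥(AntiSub Q) :=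
    LinearMap.codRestrict (AntiSub Q) (P2.comp K.subtype) (fun v => hmem' v v.2)
  have hinj : Function.Injective F := by
    rw [← LinearMap.ker_eq_bot, LinearMap.ker_eq_bot']
    intro v hv0
    exact Subtype.ext (hinj' v.1 v.2 (congrArg Subtype.val hv0))
  have hsurj : Function.Surjective F := by
    rintro ⟨y, hy⟩
    obtain ⟨w, hw⟩ := exists_w Q hQ σ hli y hy
    obtain ⟨hy1, hy2⟩ := (mem_AntiSub Q).mp hy
    set x : (Fin Q.f → Vec n) × (Fin Q.f → Vec n) := (fun i => - alphaOf (w i), w) with hxdef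
    have hu : ∀ i j, uL Q.ν i j x
        = 2 * lorentz (Q.ν i) (w j) - 2 * lorentz (w i) (Q.ν j) := by
      intro i j
      show x.1 i ⬝ᵥ Q.ν j + alphaOf (Q.ν i) ⬝ᵥ x.2 j = _
      rw [hxdef]
      show (- alphaOf (w i)) ⬝ᵥ Q.ν j + alphaOf (Q.ν i) ⬝ᵥ w j = _
      rw [neg_dotProduct, alphaOf_dot, alphaOf_dot]
      ring
    have huanti : ∀ i j, uL Q.ν j i x = - uL Q.ν i j x := by
      intro i j
      rw [hu, hu]
      have e1 := lorentz_comm (Q.ν j) (w i)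
      have e2 := lorentz_comm (w j) (Q.ν i)
      linarith
    have hu0 : ∀ i, uL Q.ν i i x = 0 := by
      intro i
      rw [hu]
      have := lorentz_comm (Q.ν i) (w i)
      linarith
    have huy : ∀ i j, (i ≠ j ∧ Q.Adj i j ∧ Q.ord i j = 2) → uL Q.ν i j x = y i j := by
      intro i j h
      rw [hu]
      exact hw i j h.1 h.2.1 h.2.2
    have hmemK : TD Q x ∈ K := by
      refine Submodule.mem_inf.mpr ⟨⟨x, rfl⟩, ?_⟩
      rw [LinearMap.mem_ker, TD_apply]
      refine Prod.ext (funext fun i => ?_) (funext fun i => funext fun j => ?_)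
      · show 2 * uL Q.ν i i x = (0 : (Fin Q.f → ℝ) × (Fin Q.f → Fin Q.f → ℝ)).1 i
        rw [hu0]
        simp
      · show (if i < j ∧ Q.Adj i j then
            (if Q.ord i j = 2 then
              (if i ≠ j ∧ Q.Adj i j ∧ Q.ord i j = 2 then uL Q.ν i j x else 0)
                + (if j ≠ i ∧ Q.Adj j i ∧ Q.ord j i = 2 then uL Q.ν j i x else 0)
             else (alphaOf (Q.ν i) ⬝ᵥ Q.ν j)⁻¹ *
               (if i < j ∧ Q.Adj i j ∧ 3 ≤ Q.ord i j then
                  alphaOf (Q.ν i) ⬝ᵥ Q.ν j * uL Q.ν j i x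
                    + alphaOf (Q.ν j) ⬝ᵥ Q.ν i * uL Q.ν i j x
                else 0))
          else 0) = (0 : (Fin Q.f → ℝ) × (Fin Q.f → Fin Q.f → ℝ)).2 i j
        simp only [Prod.snd_zero, Pi.zero_apply]
        by_cases hA : i < j ∧ Q.Adj i j
        · rw [if_pos hA]
          by_cases h2 : Q.ord i j = 2
          · rw [if_pos h2, if_pos ⟨ne_of_lt hA.1, hA.2, h2⟩,
              if_pos ⟨(ne_of_lt hA.1).symm, adj_symm Q hA.2, by rw [hQ.2.1]; exact h2⟩]
            have := huanti i j
            linarith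
          · have h3 : 3 ≤ Q.ord i j := by
              have := (hQ.2.2.2.2.2 i j hA.2).1; omega
            rw [if_neg h2, if_pos ⟨hA.1, hA.2, h3⟩, c_symm Q i j, huanti i j]
            ring
        · rw [if_neg hA]
    refine ⟨⟨TD Q x, hmemK⟩, ?_⟩
    refine Subtype.ext ?_
    show P2 (TD Q x) = y
    rw [TD_apply]
    funext i j
    show (if i ≠ j ∧ Q.Adj i j ∧ Q.ord i j = 2 then uL Q.ν i j x else 0) = y i j
    by_cases h : i ≠ j ∧ Q.Adj i j ∧ Q.ord i j = 2
    · rw [if_pos h]; exact huy i j h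
    · rw [if_neg h]; exact (hy1 i j h).symm
  exact (LinearEquiv.ofBijective F ⟨hinj, hsurj⟩).finrank_eq

end E2

end RankAux
end RankAux
/-- Lemma 4.3, the main lemma.  Let `P` be a compact hyperbolic Coxeter
`n`-polytope with unit normal vectors `b̄₀` and dual vectors `ᾱ₀ = (2⟨ν_i, ·⟩)_i`, and let
`e₂` be the number of ridges of order `2`.  If the associated Coxeter orbifold `P̂` is
weakly orderable, then `rank DΦ_{P̂}` at `(ᾱ₀, b̄₀)` equals `rank DΨ_{P̂}` at `b̄₀`
plus `e₂`. -/
theorem rank_DPhi_eq_rank_DPsi_add_e2 {n : ℕ} (Q : HypData n) (hQ : Q.IsCoxeter)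
    (hwo : Q.WeaklyOrderable) :
    rankDPhi n Q.f Q.Adj Q.ord Q.hypPoint = rankDPsi n Q.f Q.Adj Q.ord Q.ν + Q.e2 := by
  classical
  obtain ⟨σ, hσ⟩ := hwo
  have hli : ∀ i, LinearIndependent ℝ
      (fun j : {j // σ i < σ j ∧ Q.Adj i j ∧ Q.ord i j = 2} => alphaOf (Q.ν j)) :=
    fun i => (hσ i).2
  have hPhi := RankAux.hasFDeriv_Phi Q
  have hPsi := RankAux.hasFDeriv_Psi Q
  unfold rankDPhi rankDPsi
  rw [hPhi.fderiv, hPsi.fderiv]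
  have hkey := RankAux.key_identity Q hQ
  have hmap : (LinearMap.range (RankAux.TD Q).toLinearMap).map (RankAux.piL Q)
      = LinearMap.range (RankAux.SD Q).toLinearMap := by
    rw [← LinearMap.range_comp, hkey,
      LinearMap.range_comp_of_range_eq_top _ (LinearMap.range_eq_top.2 (RankAux.LL_surj Q))]
  have hrank := RankAux.finrank_map_add_inf_ker
    (LinearMap.range (RankAux.TD Q).toLinearMap) (RankAux.piL Q)
  rw [hmap] at hrank
  have he2 := RankAux.finrank_inf Q hQ σ hli
  omega
end
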